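/- arXiv:2503.23826 — 5 statements merged into one kernel-verified Lean document; each statement's English description precedes it below -/
import Mathlib

section
/- Let A be a WFA over alphabet Σ. (1) If there exists B ∈ ℕ such that A has no B-gap witness over Σ, then A is determinizable. (2) If there is a finite alphabet Σ′ ⊆ Σ such that for every B ∈ ℕ there is a B-gap witness over Σ′, then A is not determinizable. In particular, a WFA over a finite alphabet Σ is determinizable if and only if for some B ∈ ℕ there is no B-gap witness over Σ. -/
open scoped Classical

/-- `ℤ∞ = ℤ ∪ {∞}`. -/
abbrev ZInf : Type := WithTop ℤ

/-- `mwt Δ w p q` is the minimal weight of a run of the WFA with transition weights `Δ`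
on the word `w` from state `p` to state `q` (`⊤` if there is no such run). -/
noncomputable def mwt {Q A : Type*} [Fintype Q] (Δ : Q → A → Q → ZInf) :
    List A → Q → Q → ZInf
  | [], p, q => if p = q then 0 else ⊤
  | σ :: w, p, q => Finset.univ.inf fun t => Δ p σ t + mwt Δ w t q

/-- `wtW Δ q₀ w = mwt(w, q₀ → Q)`: the value that the WFA `(Δ, q₀)` assigns to the
word `w`. -/
noncomputable def wtW {Q A : Type*} [Fintype Q] (Δ : Q → A → Q → ZInf) (q₀ : Q)
    (w : List A) : ZInf :=
  Finset.univ.inf fun q => mwt Δ w q₀ q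

/-- A WFA is deterministic if from every state, on every letter, at most one transition has
finite weight. -/
def IsDet {Q A : Type*} (Δ : Q → A → Q → ZInf) : Prop :=
  ∀ p σ q q', Δ p σ q ≠ ⊤ → Δ p σ q' ≠ ⊤ → q = q'

/-- A WFA is determinizable if there is a deterministic WFA over the same alphabet that
computes the same function on words. -/
def Determinizable {Q A : Type*} [Fintype Q] (Δ : Q → A → Q → ZInf) (q₀ : Q) : Prop :=
  ∃ (Q' : Type) (inst : Fintype Q') (Δ' : Q' → A → Q' → ZInf) (q₀' : Q'),
    IsDet Δ' ∧ ∀ w : List A, @wtW Q' A inst Δ' q₀' w = wtW Δ q₀ w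

/-- The words `x, y` and the state `q` form a `B`-gap witness for the WFA `(Δ, q₀)`:
`mwt(x⬝y, q₀ → Q)` equals the minimal weight of a run on `x⬝y` from `q₀` whose state after
the prefix `x` is `q`, this common value is finite, and
`mwt(x, q₀ → q) − mwt(x, q₀ → Q) > B`. -/
def GapWitness {Q A : Type*} [Fintype Q] (Δ : Q → A → Q → ZInf) (q₀ : Q)
    (B : ℕ) (x y : List A) (q : Q) : Prop :=
  wtW Δ q₀ (x ++ y) = mwt Δ x q₀ q + wtW Δ q y ∧
  wtW Δ q₀ (x ++ y) ≠ ⊤ ∧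
  wtW Δ q₀ x + (B : ZInf) < mwt Δ x q₀ q

section Helpers
variable {ι : Type*}

lemma zinf_add_inf (a : ZInf) {s : Finset ι} (hs : s.Nonempty) (f : ι → ZInf) :
    a + s.inf f = s.inf (fun i => a + f i) := by
  induction hs using Finset.Nonempty.cons_induction with
  | singleton i => simp
  | cons i s hi hs ih =>
      rw [Finset.inf_cons, Finset.inf_cons, ← ih, ← min_add_add_left]

lemma zinf_inf_add (a : ZInf) {s : Finset ι} (hs : s.Nonempty) (f : ι → ZInf) :
    s.inf f + a = s.inf (fun i => f i + a) := by
  induction hs using Finset.Nonempty.cons_induction with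
  | singleton i => simp
  | cons i s hi hs ih =>
      rw [Finset.inf_cons, Finset.inf_cons, ← ih, ← min_add_add_right]

set_option linter.unusedSectionVars false
variable {Q A : Type*} [Fintype Q] [Nonempty Q] (Δ : Q → A → Q → ZInf)

lemma mwt_nil (p q : Q) : mwt Δ [] p q = if p = q then 0 else ⊤ := rfl

lemma mwt_cons (σ : A) (w : List A) (p q : Q) :
    mwt Δ (σ :: w) p q = Finset.univ.inf fun t => Δ p σ t + mwt Δ w t q := rfl

lemma inf_ite_eq' (p : Q) (f : Q → ZInf) :
    (Finset.univ.inf fun h => (if p = h then (0:ZInf) else ⊤) + f h) = f p := by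
  apply le_antisymm
  · exact le_trans (Finset.inf_le (Finset.mem_univ p)) (by simp)
  · refine Finset.le_inf fun h _ => ?_
    by_cases hph : p = h
    · subst hph; simp
    · simp [hph]

lemma inf_ite_eq₂ (p : Q) (g : Q → ZInf) :
    (Finset.univ.inf fun t => g t + (if t = p then (0:ZInf) else ⊤)) = g p := by
  apply le_antisymm
  · exact le_trans (Finset.inf_le (Finset.mem_univ p)) (by simp)
  · refine Finset.le_inf fun t _ => ?_
    by_cases htp : t = p
    · subst htp; simp
    · simp [htp]

lemma mwt_single (σ : A) (p h : Q) : mwt Δ [σ] p h = Δ p σ h := by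
  rw [show ([σ] : List A) = σ :: [] from rfl, mwt_cons]
  exact inf_ite_eq₂ h fun t => Δ p σ t

lemma mwt_append (x y : List A) (p r : Q) :
    mwt Δ (x ++ y) p r = Finset.univ.inf fun h => mwt Δ x p h + mwt Δ y h r := by
  induction x generalizing p with
  | nil =>
      simp only [List.nil_append, mwt_nil]
      exact (inf_ite_eq' p fun h => mwt Δ y h r).symm
  | cons σ x ih =>
      simp only [List.cons_append, mwt_cons]
      rw [show (Finset.univ.inf fun t => Δ p σ t + mwt Δ (x ++ y) t r) =
          Finset.univ.inf fun t => Finset.univ.inf fun h => Δ p σ t + (mwt Δ x t h + mwt Δ y h r) by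
        refine Finset.inf_congr rfl fun t _ => ?_
        rw [ih t, zinf_add_inf _ Finset.univ_nonempty]]
      rw [Finset.inf_comm]
      refine Finset.inf_congr rfl fun h _ => ?_
      rw [zinf_inf_add _ Finset.univ_nonempty]
      exact Finset.inf_congr rfl fun t _ => (add_assoc _ _ _).symm

lemma wtW_nil (p : Q) : wtW Δ p [] = 0 := by
  unfold wtW
  exact le_antisymm (le_trans (Finset.inf_le (Finset.mem_univ p)) (by simp [mwt_nil]))
    (Finset.le_inf fun q _ => by by_cases h : p = q <;> simp [mwt_nil, h])

lemma wtW_append (x y : List A) (p : Q) :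
    wtW Δ p (x ++ y) = Finset.univ.inf fun h => mwt Δ x p h + wtW Δ h y := by
  unfold wtW
  rw [show (Finset.univ.inf fun q => mwt Δ (x++y) p q) =
      Finset.univ.inf fun q => Finset.univ.inf fun h => mwt Δ x p h + mwt Δ y h q by
    exact Finset.inf_congr rfl fun q _ => mwt_append Δ x y p q]
  rw [Finset.inf_comm]
  exact Finset.inf_congr rfl fun h _ => (zinf_add_inf _ Finset.univ_nonempty _).symm

lemma wtW_cons (σ : A) (y : List A) (p : Q) :
    wtW Δ p (σ :: y) = Finset.univ.inf fun t => Δ p σ t + wtW Δ t y := by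
  have h1 := wtW_append Δ [σ] y p
  rw [List.singleton_append] at h1
  rw [h1]
  exact Finset.inf_congr rfl fun h _ => by rw [mwt_single]

lemma wtW_single (σ : A) (p : Q) :
    wtW Δ p [σ] = Finset.univ.inf fun t => Δ p σ t := by
  rw [show ([σ] : List A) = σ :: [] from rfl, wtW_cons]
  exact Finset.inf_congr rfl fun t _ => by rw [wtW_nil, add_zero]

lemma wtW_concat (x : List A) (σ : A) (p : Q) :
    wtW Δ p (x ++ [σ]) = Finset.univ.inf fun q => mwt Δ x p q + wtW Δ q [σ] :=
  wtW_append Δ x [σ] p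

lemma mwt_concat (x : List A) (σ : A) (p t : Q) :
    mwt Δ (x ++ [σ]) p t = Finset.univ.inf fun q => mwt Δ x p q + Δ q σ t := by
  rw [mwt_append]
  exact Finset.inf_congr rfl fun q _ => by rw [mwt_single]

end Helpers

section Det
set_option linter.unusedSectionVars false
variable {Q A : Type*} [Fintype Q] [Nonempty Q] (Δ' : Q → A → Q → ZInf)

lemma det_unique (hdet : IsDet Δ') :
    ∀ (x : List A) (p h h' : Q), mwt Δ' x p h ≠ ⊤ → mwt Δ' x p h' ≠ ⊤ → h = h' := by
  intro x
  induction x with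
  | nil =>
      intro p h h' h1 h2
      rw [mwt_nil] at h1 h2
      by_cases e1 : p = h
      · by_cases e2 : p = h'
        · exact e1 ▸ e2 ▸ rfl
        · simp [e2] at h2
      · simp [e1] at h1
  | cons σ x ih =>
      intro p h h' h1 h2
      rw [mwt_cons, Ne, Finset.inf_eq_top_iff] at h1 h2
      push_neg at h1 h2
      obtain ⟨t, -, ht⟩ := h1
      obtain ⟨t', -, ht'⟩ := h2
      have hΔt : Δ' p σ t ≠ ⊤ := fun h => ht (by simp [h])
      have hΔt' : Δ' p σ t' ≠ ⊤ := fun h => ht' (by simp [h])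
      have htt : t = t' := hdet p σ t t' hΔt hΔt'
      subst htt
      have hmt : mwt Δ' x t h ≠ ⊤ := fun h => ht (by simp [h])
      have hmt' : mwt Δ' x t h' ≠ ⊤ := fun h => ht' (by simp [h])
      exact ih t h h' hmt hmt'

/-- For a deterministic WFA with a finite-weight run on `x` from `p`, there is a unique
end state, `mwt` to it equals `wtW`, and `wtW` decomposes along it. -/
lemma det_decompose (hdet : IsDet Δ') (p : Q) (x : List A) (hx : wtW Δ' p x ≠ ⊤) :
    ∃ h : Q, mwt Δ' x p h = wtW Δ' p x ∧
      ∀ y : List A, wtW Δ' p (x ++ y) = wtW Δ' p x + wtW Δ' h y := by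
  unfold wtW at hx
  rw [Ne, Finset.inf_eq_top_iff] at hx
  push_neg at hx
  obtain ⟨h, -, hh⟩ := hx
  refine ⟨h, ?_, ?_⟩
  · apply le_antisymm
    · refine Finset.le_inf fun q _ => ?_
      by_cases hq : q = h
      · subst hq; exact le_rfl
      · have : mwt Δ' x p q = ⊤ := by
          by_contra hq'
          exact hq (det_unique Δ' hdet x p q h hq' hh)
        simp [this]
    · exact Finset.inf_le (Finset.mem_univ h)
  · intro y
    rw [wtW_append]
    have hw : mwt Δ' x p h = wtW Δ' p x := by
      apply le_antisymm
      · refine Finset.le_inf fun q _ => ?_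
        by_cases hq : q = h
        · subst hq; exact le_rfl
        · have : mwt Δ' x p q = ⊤ := by
            by_contra hq'
            exact hq (det_unique Δ' hdet x p q h hq' hh)
          simp [this]
      · exact Finset.inf_le (Finset.mem_univ h)
    apply le_antisymm
    · exact le_trans (Finset.inf_le (Finset.mem_univ h)) (by rw [hw])
    · refine Finset.le_inf fun q _ => ?_
      by_cases hq : q = h
      · subst hq; rw [hw]
      · have : mwt Δ' x p q = ⊤ := by
          by_contra hq'
          exact hq (det_unique Δ' hdet x p q h hq' hh)
        simp [this]

end Det

section Part2
variable {Q A : Type*} [Fintype Q]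

lemma wtW_prefix_ne_top (Δ : Q → A → Q → ZInf) (q₀ : Q) (x y : List A)
    (h : wtW Δ q₀ (x ++ y) ≠ ⊤) : wtW Δ q₀ x ≠ ⊤ := by
  have : Nonempty Q := ⟨q₀⟩
  rw [wtW_append, Ne, Finset.inf_eq_top_iff] at h
  push_neg at h
  obtain ⟨q, -, hq⟩ := h
  have hm : mwt Δ x q₀ q ≠ ⊤ := fun h => hq (by simp [h])
  intro htop
  unfold wtW at htop
  rw [Finset.inf_eq_top_iff] at htop
  exact hm (htop q (Finset.mem_univ q))

lemma part2 (Δ : Q → A → Q → ZInf) (q₀ : Q)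
    (hw : ∀ B : ℕ, ∃ (x y : List A) (q : Q), GapWitness Δ q₀ B x y q) :
    ¬ Determinizable Δ q₀ := by
  have : Nonempty Q := ⟨q₀⟩
  rintro ⟨Q', instQ', Δ', q₀', hdet, heq⟩
  have : Nonempty Q' := ⟨q₀'⟩
  -- for each B choose witness data and the D-state after x
  choose x y q hgw using hw
  have hxyne : ∀ B, wtW Δ q₀ (x B ++ y B) ≠ ⊤ := fun B => (hgw B).2.1
  have hxne : ∀ B, wtW Δ q₀ (x B) ≠ ⊤ := fun B => wtW_prefix_ne_top Δ q₀ _ _ (hxyne B)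
  have hxne' : ∀ B, wtW Δ' q₀' (x B) ≠ ⊤ := fun B => by rw [heq]; exact hxne B
  choose p hp1 hp2 using fun B => det_decompose Δ' hdet q₀' (x B) (hxne' B)
  -- pigeonhole
  obtain ⟨⟨P, Qst⟩, hfib⟩ :=
    Finite.exists_infinite_fiber (fun B : ℕ => ((p B, q B) : Q' × Q))
  have hfib' : (Set.preimage (fun B : ℕ => ((p B, q B) : Q' × Q)) {(P, Qst)}).Infinite := by
    rwa [← Set.infinite_coe_iff]
  obtain ⟨B₁, hB₁⟩ := hfib'.nonempty
  simp only [Set.mem_preimage, Set.mem_singleton_iff, Prod.mk.injEq] at hB₁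
  -- finiteness of the various quantities for B₁
  have hm₁ : mwt Δ (x B₁) q₀ (q B₁) ≠ ⊤ := by
    intro h
    exact hxyne B₁ (by rw [(hgw B₁).1, h, top_add])
  obtain ⟨m₁, hm₁'⟩ := WithTop.ne_top_iff_exists.1 hm₁
  obtain ⟨a₁, ha₁'⟩ := WithTop.ne_top_iff_exists.1 (hxne B₁)
  -- pick B₂ in the fiber with B₂ ≥ (m₁ - a₁).toNat
  obtain ⟨B₂, hB₂mem, hB₂big⟩ := hfib'.exists_gt ((m₁ - a₁).toNat)
  simp only [Set.mem_preimage, Set.mem_singleton_iff, Prod.mk.injEq] at hB₂mem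
  -- align states
  have hq12 : q B₂ = q B₁ := hB₂mem.2.trans hB₁.2.symm
  have hp12 : p B₂ = p B₁ := hB₂mem.1.trans hB₁.1.symm
  have hG2 := (hgw B₂).1
  have hg₂ := (hgw B₂).2.2
  have hxyne₂ := hxyne B₂
  have hp2' := hp2 B₂ (y B₂)
  rw [hq12] at hG2 hg₂
  rw [hp12] at hp2'
  have hm₂ : mwt Δ (x B₂) q₀ (q B₁) ≠ ⊤ := by
    intro h
    exact hxyne₂ (by rw [hG2, h, top_add])
  have hw₂ : wtW Δ (q B₁) (y B₂) ≠ ⊤ := by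
    intro h
    exact hxyne₂ (by rw [hG2, h, add_top])
  obtain ⟨m₂, hm₂'⟩ := WithTop.ne_top_iff_exists.1 hm₂
  obtain ⟨w₂, hw₂'⟩ := WithTop.ne_top_iff_exists.1 hw₂
  obtain ⟨a₂, ha₂'⟩ := WithTop.ne_top_iff_exists.1 (hxne B₂)
  -- E2 : a₂ + W' = m₂ + w₂
  have hE2 : wtW Δ q₀ (x B₂) + wtW Δ' (p B₁) (y B₂) =
      mwt Δ (x B₂) q₀ (q B₁) + wtW Δ (q B₁) (y B₂) := by
    rw [heq, heq] at hp2'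
    rw [← hp2', hG2]
  have hW' : wtW Δ' (p B₁) (y B₂) ≠ ⊤ := by
    intro h
    rw [h, add_top, ← hm₂', ← hw₂', ← WithTop.coe_add] at hE2
    exact (WithTop.coe_ne_top (hE2.symm))
  obtain ⟨W', hW''⟩ := WithTop.ne_top_iff_exists.1 hW'
  -- E1 : a₁ + W' ≤ m₁ + w₂
  have hE1 : wtW Δ q₀ (x B₁) + wtW Δ' (p B₁) (y B₂) ≤
      mwt Δ (x B₁) q₀ (q B₁) + wtW Δ (q B₁) (y B₂) := by
    have h1 := hp2 B₁ (y B₂)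
    rw [heq, heq] at h1
    rw [← h1, wtW_append]
    exact Finset.inf_le (Finset.mem_univ (q B₁))
  -- gap inequalities
  have hg₁ : wtW Δ q₀ (x B₁) + (B₁ : ZInf) < mwt Δ (x B₁) q₀ (q B₁) := (hgw B₁).2.2
  -- lift everything to ℤ
  rw [← ha₁', ← hm₁'] at hg₁
  rw [← ha₂', ← hm₂'] at hg₂
  rw [← ha₂', ← hm₂', ← hw₂', ← hW''] at hE2
  rw [← ha₁', ← hm₁', ← hw₂', ← hW''] at hE1
  have hg₁' : a₁ + (B₁ : ℤ) < m₁ := by exact_mod_cast hg₁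
  have hg₂' : a₂ + (B₂ : ℤ) < m₂ := by exact_mod_cast hg₂
  have hE2' : a₂ + W' = m₂ + w₂ := by exact_mod_cast hE2
  have hE1' : a₁ + W' ≤ m₁ + w₂ := by exact_mod_cast hE1
  have hBB : (m₁ - a₁ : ℤ).toNat < B₂ := hB₂big
  omega

end Part2

section Part1
set_option linter.unusedSectionVars false
variable {Q A : Type*} [Fintype Q] (Δ : Q → A → Q → ZInf) (q₀ : Q) (B : ℕ)

/-- A generic inf-swap lemma. -/
lemma inf_swap {ι κ : Type*} (s : Finset ι) (t : Finset κ) (g : ι → κ → ZInf) :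
    (s.inf fun i => t.inf fun j => g i j) = t.inf fun j => s.inf fun i => g i j := by
  apply le_antisymm
  · refine Finset.le_inf fun j hj => Finset.le_inf fun i hi => ?_
    exact le_trans (Finset.inf_le hi) (Finset.inf_le hj)
  · refine Finset.le_inf fun i hi => Finset.le_inf fun j hj => ?_
    exact le_trans (Finset.inf_le hj) (Finset.inf_le hi)

/-- If a function is `⊤` except possibly at `h₀`, its inf is the value at `h₀`. -/
lemma inf_eq_single {ι : Type*} [Fintype ι] (h₀ : ι) (F : ι → ZInf)
    (hF : ∀ h, h ≠ h₀ → F h = ⊤) : Finset.univ.inf F = F h₀ := by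
  apply le_antisymm (Finset.inf_le (Finset.mem_univ h₀))
  refine Finset.le_inf fun h _ => ?_
  by_cases hh : h = h₀
  · subst hh; exact le_rfl
  · rw [hF h hh]; exact le_top

/-- The state space of the determinized automaton. -/
abbrev DetQ (Q : Type*) (B : ℕ) := Q → Option (Fin (B + 1))

noncomputable def oval {B : ℕ} (o : Option (Fin (B + 1))) : ZInf :=
  o.elim ⊤ (fun n => ((n : ℤ) : ZInf))

noncomputable def dm (f : DetQ Q B) (σ : A) (t : Q) : ZInf :=
  Finset.univ.inf fun q' => oval (f q') + Δ q' σ t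

noncomputable def dc (f : DetQ Q B) (σ : A) : ZInf :=
  Finset.univ.inf fun t => dm Δ B f σ t

noncomputable def dstep (f : DetQ Q B) (σ : A) : DetQ Q B := fun t =>
  if h : ∃ n : Fin (B + 1), dm Δ B f σ t = dc Δ B f σ + ((n : ℤ) : ZInf) then some h.choose
  else none

noncomputable def dTrans : DetQ Q B → A → DetQ Q B → ZInf := fun f σ g =>
  if g = dstep Δ B f σ then dc Δ B f σ else ⊤

noncomputable def f0 : DetQ Q B := fun q => if q = q₀ then some 0 else none

lemma dc_le_dm (f : DetQ Q B) (σ : A) (t : Q) : dc Δ B f σ ≤ dm Δ B f σ t :=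
  Finset.inf_le (Finset.mem_univ t)

lemma dstep_spec (f : DetQ Q B) (σ : A) (t : Q) :
    (dc Δ B f σ + oval (dstep Δ B f σ t) = dm Δ B f σ t) ∨
    (oval (dstep Δ B f σ t) = ⊤ ∧
      ¬ ∃ n : Fin (B + 1), dm Δ B f σ t = dc Δ B f σ + ((n : ℤ) : ZInf)) := by
  unfold dstep
  split
  · rename_i h
    left
    rw [show oval (some h.choose) = ((h.choose : ℤ) : ZInf) from rfl]
    exact h.choose_spec.symm
  · rename_i h
    right
    exact ⟨rfl, h⟩

lemma dc_add_oval_dstep_ge (f : DetQ Q B) (σ : A) (t : Q) :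
    dm Δ B f σ t ≤ dc Δ B f σ + oval (dstep Δ B f σ t) := by
  rcases dstep_spec Δ B f σ t with h | ⟨h, -⟩
  · rw [h]
  · rw [h, add_top]; exact le_top

/-- The invariant maintained by the subset construction. -/
def GoodP (x : List A) (f : DetQ Q B) : Prop :=
  (∀ t, mwt Δ x q₀ t ≤ wtW Δ q₀ x + oval (f t)) ∧
  (∀ y, wtW Δ q₀ (x ++ y) = wtW Δ q₀ x + Finset.univ.inf fun t => oval (f t) + wtW Δ t y)

variable [Nonempty Q]

lemma gfun_single (f : DetQ Q B) (σ : A) :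
    (Finset.univ.inf fun t => oval (f t) + wtW Δ t [σ]) = dc Δ B f σ := by
  have h1 : (Finset.univ.inf fun t => oval (f t) + wtW Δ t [σ]) =
      Finset.univ.inf fun t => Finset.univ.inf fun u => oval (f t) + Δ t σ u := by
    refine Finset.inf_congr rfl fun t _ => ?_
    rw [wtW_single, zinf_add_inf _ Finset.univ_nonempty]
  rw [h1, inf_swap]
  rfl

lemma mwt_concat_le (x : List A) (f : DetQ Q B) (σ : A) (t : Q)
    (hg1 : ∀ t, mwt Δ x q₀ t ≤ wtW Δ q₀ x + oval (f t)) :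
    mwt Δ (x ++ [σ]) q₀ t ≤ wtW Δ q₀ x + dm Δ B f σ t := by
  rw [mwt_concat, show wtW Δ q₀ x + dm Δ B f σ t =
      Finset.univ.inf fun q => wtW Δ q₀ x + (oval (f q) + Δ q σ t) by
    rw [show dm Δ B f σ t = Finset.univ.inf fun q' => oval (f q') + Δ q' σ t from rfl,
      zinf_add_inf _ Finset.univ_nonempty]]
  refine Finset.inf_mono_fun fun q _ => ?_
  calc mwt Δ x q₀ q + Δ q σ t ≤ (wtW Δ q₀ x + oval (f q)) + Δ q σ t :=
        add_le_add_left (hg1 q) _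
    _ = wtW Δ q₀ x + (oval (f q) + Δ q σ t) := add_assoc _ _ _

lemma inner_cons (f : DetQ Q B) (σ : A) (y : List A) :
    (Finset.univ.inf fun q => oval (f q) + wtW Δ q (σ :: y)) =
      Finset.univ.inf fun t => dm Δ B f σ t + wtW Δ t y := by
  have h1 : (Finset.univ.inf fun q => oval (f q) + wtW Δ q (σ :: y)) =
      Finset.univ.inf fun q => Finset.univ.inf fun t => (oval (f q) + Δ q σ t) + wtW Δ t y := by
    refine Finset.inf_congr rfl fun q _ => ?_
    rw [wtW_cons, zinf_add_inf _ Finset.univ_nonempty]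
    exact Finset.inf_congr rfl fun t _ => (add_assoc _ _ _).symm
  rw [h1, inf_swap]
  refine Finset.inf_congr rfl fun t _ => ?_
  rw [show dm Δ B f σ t = Finset.univ.inf fun q' => oval (f q') + Δ q' σ t from rfl,
    zinf_inf_add _ Finset.univ_nonempty]

lemma step_good
    (Hng : ¬ ∃ (x y : List A) (q : Q), GapWitness Δ q₀ B x y q)
    (x : List A) (f : DetQ Q B) (σ : A) (hg : GoodP Δ q₀ B x f) :
    wtW Δ q₀ (x ++ [σ]) = wtW Δ q₀ x + dc Δ B f σ ∧
      GoodP Δ q₀ B (x ++ [σ]) (dstep Δ B f σ) := by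
  have s0 : wtW Δ q₀ (x ++ [σ]) = wtW Δ q₀ x + dc Δ B f σ := by
    rw [hg.2 [σ], gfun_single]
  refine ⟨s0, ?_, ?_⟩
  · -- new G1
    intro t
    rcases dstep_spec Δ B f σ t with hsp | ⟨hsp, -⟩
    · rw [s0, add_assoc, hsp]
      exact mwt_concat_le Δ q₀ B x f σ t hg.1
    · rw [hsp, add_top]
      exact le_top
  · -- new G2
    intro y
    rw [List.append_assoc, List.singleton_append, hg.2 (σ :: y), inner_cons, s0]
    -- goal : wtW x + inf_t (dm t + wtW t y) = (wtW x + dc) + inf_t (oval (dstep t) + wtW t y)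
    have hRHS : (wtW Δ q₀ x + dc Δ B f σ) +
        (Finset.univ.inf fun t => oval (dstep Δ B f σ t) + wtW Δ t y) =
        wtW Δ q₀ x + Finset.univ.inf fun t =>
          dc Δ B f σ + oval (dstep Δ B f σ t) + wtW Δ t y := by
      rw [add_assoc, zinf_add_inf (dc Δ B f σ) Finset.univ_nonempty,
        zinf_add_inf (wtW Δ q₀ x) Finset.univ_nonempty,
        zinf_add_inf (wtW Δ q₀ x) Finset.univ_nonempty]
      refine Finset.inf_congr rfl fun t _ => ?_
      simp [add_assoc]
    rw [hRHS]
    apply le_antisymm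
    · -- ≤ : pointwise dm ≤ dc + oval(dstep)
      refine add_le_add_right (Finset.inf_mono_fun fun t _ => ?_) _
      exact add_le_add_left (dc_add_oval_dstep_ge Δ B f σ t) _
    · -- ≥
      by_cases hL : (Finset.univ.inf fun t => dm Δ B f σ t + wtW Δ t y) = ⊤
      · rw [hL, add_top]; exact le_top
      · obtain ⟨t₀, -, ht₀⟩ := Finset.exists_mem_eq_inf Finset.univ Finset.univ_nonempty
          (fun t => dm Δ B f σ t + wtW Δ t y)
        rw [ht₀] at hL ⊢
        by_cases hwx : wtW Δ q₀ x = ⊤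
        · rw [hwx, top_add]; exact le_top
        by_cases hex : ∃ n : Fin (B + 1), dm Δ B f σ t₀ = dc Δ B f σ + ((n : ℤ) : ZInf)
        · have heq1 : dc Δ B f σ + oval (dstep Δ B f σ t₀) = dm Δ B f σ t₀ := by
            rcases dstep_spec Δ B f σ t₀ with h | ⟨-, h⟩
            · exact h
            · exact absurd hex h
          refine le_trans (add_le_add_right (Finset.inf_le (Finset.mem_univ t₀)) _) ?_
          rw [heq1]
        · -- build a gap witness, contradiction
          exfalso
          have hdmne : dm Δ B f σ t₀ ≠ ⊤ := fun h => hL (by rw [h, top_add])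
          have hwtne : wtW Δ t₀ y ≠ ⊤ := fun h => hL (by rw [h, add_top])
          have hdcne : dc Δ B f σ ≠ ⊤ := fun h =>
            hdmne (top_le_iff.1 (h ▸ dc_le_dm Δ B f σ t₀))
          obtain ⟨mv, hmv⟩ := WithTop.ne_top_iff_exists.1 hdmne
          obtain ⟨cv, hcv⟩ := WithTop.ne_top_iff_exists.1 hdcne
          obtain ⟨av, hav⟩ := WithTop.ne_top_iff_exists.1 hwx
          have hcm : cv ≤ mv := by
            have := dc_le_dm Δ B f σ t₀
            rw [← hmv, ← hcv] at this
            exact_mod_cast this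
          have hgap : cv + (B : ℤ) < mv := by
            by_contra hcon
            push_neg at hcon
            refine hex ⟨⟨(mv - cv).toNat, by omega⟩, ?_⟩
            rw [← hmv, ← hcv, ← WithTop.coe_add, WithTop.coe_eq_coe]
            simp only []
            have : ((⟨(mv - cv).toNat, by omega⟩ : Fin (B+1)) : ℤ) = mv - cv := by
              simp only [Fin.val_mk]
              omega
            rw [this]
            omega
          -- the identity established so far:
          have hId : wtW Δ q₀ ((x ++ [σ]) ++ y) = wtW Δ q₀ x + (dm Δ B f σ t₀ + wtW Δ t₀ y) := by
            rw [List.append_assoc, List.singleton_append, hg.2 (σ :: y), inner_cons, ht₀]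
          have hub : wtW Δ q₀ ((x ++ [σ]) ++ y) ≤ mwt Δ (x ++ [σ]) q₀ t₀ + wtW Δ t₀ y := by
            rw [wtW_append]
            exact Finset.inf_le (Finset.mem_univ t₀)
          have hlb : mwt Δ (x ++ [σ]) q₀ t₀ + wtW Δ t₀ y ≤
              wtW Δ q₀ x + (dm Δ B f σ t₀ + wtW Δ t₀ y) := by
            rw [← add_assoc]
            exact add_le_add_left (mwt_concat_le Δ q₀ B x f σ t₀ hg.1) _
          have hEq : wtW Δ q₀ ((x ++ [σ]) ++ y) = mwt Δ (x ++ [σ]) q₀ t₀ + wtW Δ t₀ y :=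
            le_antisymm hub (hId ▸ hlb)
          have hmwtEq : mwt Δ (x ++ [σ]) q₀ t₀ = wtW Δ q₀ x + dm Δ B f σ t₀ := by
            have h1 : mwt Δ (x ++ [σ]) q₀ t₀ + wtW Δ t₀ y =
                (wtW Δ q₀ x + dm Δ B f σ t₀) + wtW Δ t₀ y := by
              rw [add_assoc, ← hId, hEq]
            exact WithTop.add_right_cancel hwtne h1
          refine Hng ⟨x ++ [σ], y, t₀, hEq, ?_, ?_⟩
          · obtain ⟨wv, hwv⟩ := WithTop.ne_top_iff_exists.1 hwtne
            rw [hId, ← hav, ← hmv, ← hwv, ← WithTop.coe_add, ← WithTop.coe_add]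
            exact WithTop.coe_ne_top
          · rw [s0, hmwtEq, ← hav, ← hcv, ← hmv]
            rw [← WithTop.coe_add, ← WithTop.coe_add]
            have h2 : (av + cv) + (B : ℤ) < av + mv := by omega
            exact_mod_cast h2

lemma oval_f0_self : oval (f0 q₀ B q₀) = 0 := by simp [f0, oval]

lemma oval_f0_other (q : Q) (h : q ≠ q₀) : oval (f0 q₀ B q) = ⊤ := by simp [f0, oval, h]

lemma base_good : GoodP Δ q₀ B [] (f0 q₀ B) := by
  constructor
  · intro t
    by_cases h : t = q₀
    · subst h
      rw [oval_f0_self, wtW_nil, mwt_nil]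
      simp
    · rw [oval_f0_other _ _ _ h, add_top]
      exact le_top
  · intro y
    rw [List.nil_append, wtW_nil, zero_add]
    rw [inf_eq_single q₀ _ (fun t ht => by rw [oval_f0_other _ _ _ ht, top_add])]
    rw [oval_f0_self, zero_add]

noncomputable def pairStep : DetQ Q B × ZInf → A → DetQ Q B × ZInf := fun pr σ =>
  (dstep Δ B pr.1 σ, pr.2 + dc Δ B pr.1 σ)

noncomputable def reachP (x : List A) : DetQ Q B × ZInf :=
  x.foldl (pairStep Δ B) (f0 q₀ B, 0)

lemma run_spec (Hng : ¬ ∃ (x y : List A) (q : Q), GapWitness Δ q₀ B x y q) :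
    ∀ x : List A, GoodP Δ q₀ B x (reachP Δ q₀ B x).1 ∧ (reachP Δ q₀ B x).2 = wtW Δ q₀ x := by
  intro x
  induction x using List.reverseRecOn with
  | nil =>
      refine ⟨base_good Δ q₀ B, ?_⟩
      rw [wtW_nil]
      rfl
  | append_singleton x σ ih =>
      have hfold : reachP Δ q₀ B (x ++ [σ]) = pairStep Δ B (reachP Δ q₀ B x) σ := by
        unfold reachP
        rw [List.foldl_append]
        rfl
      obtain ⟨hstep0, hstepG⟩ := step_good Δ q₀ B Hng x (reachP Δ q₀ B x).1 σ ih.1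
      constructor
      · rw [hfold]
        exact hstepG
      · rw [hfold]
        show (reachP Δ q₀ B x).2 + dc Δ B (reachP Δ q₀ B x).1 σ = wtW Δ q₀ (x ++ [σ])
        rw [ih.2, hstep0]

lemma foldl_pair (w : List A) : ∀ (f : DetQ Q B) (a : ZInf),
    (w.foldl (pairStep Δ B) (f, a)).1 = w.foldl (dstep Δ B) f ∧
    (w.foldl (pairStep Δ B) (f, a)).2 = a + (w.foldl (pairStep Δ B) (f, 0)).2 := by
  induction w with
  | nil => intro f a; exact ⟨rfl, (add_zero a).symm⟩
  | cons σ w ih =>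
      intro f a
      have h1 := ih (dstep Δ B f σ) (a + dc Δ B f σ)
      have h2 := ih (dstep Δ B f σ) (dc Δ B f σ)
      have h3 := ih (dstep Δ B f σ) ((0 : ZInf) + dc Δ B f σ)
      constructor
      · exact h1.1
      · show (w.foldl (pairStep Δ B) (dstep Δ B f σ, a + dc Δ B f σ)).2 =
          a + (w.foldl (pairStep Δ B) (dstep Δ B f σ, 0 + dc Δ B f σ)).2
        rw [h1.2, h3.2, zero_add, add_assoc]

lemma mwt_dTrans (w : List A) : ∀ f g : DetQ Q B,
    mwt (dTrans Δ B) w f g =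
      if g = w.foldl (dstep Δ B) f then (w.foldl (pairStep Δ B) (f, 0)).2 else ⊤ := by
  induction w with
  | nil =>
      intro f g
      rw [mwt_nil]
      by_cases h : f = g
      · subst h; simp
      · simp [h, Ne.symm h]
  | cons σ w ih =>
      intro f g
      rw [mwt_cons]
      rw [inf_eq_single (dstep Δ B f σ)
        (fun h => dTrans Δ B f σ h + mwt (dTrans Δ B) w h g)
        (fun h hh => by simp [dTrans, hh])]
      rw [show dTrans Δ B f σ (dstep Δ B f σ) = dc Δ B f σ by simp [dTrans]]
      rw [ih (dstep Δ B f σ) g]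
      have hsum : ((σ :: w).foldl (pairStep Δ B) (f, 0)).2 =
          dc Δ B f σ + (w.foldl (pairStep Δ B) (dstep Δ B f σ, 0)).2 := by
        show (w.foldl (pairStep Δ B) (dstep Δ B f σ, 0 + dc Δ B f σ)).2 = _
        rw [(foldl_pair Δ B w _ _).2, zero_add]
      have hreach : (σ :: w).foldl (dstep Δ B) f = w.foldl (dstep Δ B) (dstep Δ B f σ) := rfl
      rw [hreach, hsum]
      by_cases h : g = w.foldl (dstep Δ B) (dstep Δ B f σ)
      · simp [h]
      · simp [h]

lemma wtW_dTrans (Hng : ¬ ∃ (x y : List A) (q : Q), GapWitness Δ q₀ B x y q) (w : List A) :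
    wtW (dTrans Δ B) (f0 q₀ B) w = wtW Δ q₀ w := by
  unfold wtW
  rw [Finset.inf_congr rfl fun g _ => mwt_dTrans Δ B w (f0 q₀ B) g]
  rw [inf_eq_single (w.foldl (dstep Δ B) (f0 q₀ B)) _ (fun h hh => by simp [hh])]
  rw [if_pos rfl]
  have := (run_spec Δ q₀ B Hng w).2
  unfold reachP at this
  rw [this]
  rfl

lemma isdet_dTrans : IsDet (dTrans Δ B) := by
  intro p σ g g' h h'
  unfold dTrans at h h'
  by_cases hg : g = dstep Δ B p σ
  · by_cases hg' : g' = dstep Δ B p σ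
    · rw [hg, hg']
    · exact absurd (if_neg hg') h'
  · exact absurd (if_neg hg) h

end Part1

section Transport
variable {A : Type*}

lemma inf_equiv {α β : Type*} [Fintype α] [Fintype β] (e : α ≃ β) (F : β → ZInf) :
    (Finset.univ.inf fun a => F (e a)) = Finset.univ.inf F := by
  apply le_antisymm
  · refine Finset.le_inf fun b _ => ?_
    have := Finset.inf_le (f := fun a => F (e a)) (Finset.mem_univ (e.symm b))
    simpa using this
  · exact Finset.le_inf fun a _ => Finset.inf_le (Finset.mem_univ (e a))

lemma mwt_equiv {Q₁ Q₂ : Type*} [Fintype Q₁] [Fintype Q₂] (e : Q₁ ≃ Q₂)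
    (Δ₁ : Q₁ → A → Q₁ → ZInf) (w : List A) :
    ∀ (i j : Q₂), mwt (fun i σ j => Δ₁ (e.symm i) σ (e.symm j)) w i j
      = mwt Δ₁ w (e.symm i) (e.symm j) := by
  induction w with
  | nil =>
      intro i j
      have : Nonempty Q₁ := ⟨e.symm i⟩
      have : Nonempty Q₂ := ⟨i⟩
      rw [mwt_nil, mwt_nil]
      by_cases h : i = j
      · simp [h]
      · rw [if_neg h, if_neg (fun hc => h (e.symm.injective hc))]
  | cons σ w ih =>
      intro i j
      have : Nonempty Q₁ := ⟨e.symm i⟩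
      have : Nonempty Q₂ := ⟨i⟩
      rw [mwt_cons, mwt_cons]
      rw [Finset.inf_congr rfl fun t _ => by rw [ih t j]]
      exact inf_equiv e.symm fun t' => Δ₁ (e.symm i) σ t' + mwt Δ₁ w t' (e.symm j)

lemma part1 {Q : Type*} [Fintype Q] (Δ : Q → A → Q → ZInf) (q₀ : Q)
    (H : ∃ B : ℕ, ¬ ∃ (x y : List A) (q : Q), GapWitness Δ q₀ B x y q) :
    Determinizable Δ q₀ := by
  obtain ⟨B, Hng⟩ := H
  have : Nonempty Q := ⟨q₀⟩
  set n := Fintype.card (DetQ Q B) with hn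
  let e : DetQ Q B ≃ Fin n := Fintype.equivFin (DetQ Q B)
  refine ⟨Fin n, inferInstance,
    (fun i σ j => dTrans Δ B (e.symm i) σ (e.symm j)), e (f0 q₀ B), ?_, ?_⟩
  · intro p σ j j' h h'
    exact e.symm.injective (isdet_dTrans Δ B (e.symm p) σ (e.symm j) (e.symm j') h h')
  · intro w
    rw [← wtW_dTrans Δ q₀ B Hng w]
    unfold wtW
    rw [Finset.inf_congr rfl fun j _ => mwt_equiv e (dTrans Δ B) w (e (f0 q₀ B)) j]
    rw [show e.symm (e (f0 q₀ B)) = f0 q₀ B from e.symm_apply_apply _]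
    exact inf_equiv e.symm fun g => mwt (dTrans Δ B) w (f0 q₀ B) g

end Transport

/-- **Characterization of determinizability by gap witnesses.**
(1) If for some `B` there is no `B`-gap witness, then the WFA is determinizable.
(2) If there is a finite subalphabet over which there are `B`-gap witnesses for every `B`,
then the WFA is not determinizable.
(3) In particular, over a finite alphabet, the WFA is determinizable iff for some `B` there
is no `B`-gap witness. -/
theorem determinizable_iff_no_gap_witness {Q A : Type*} [Fintype Q]
    (Δ : Q → A → Q → ZInf) (q₀ : Q) :
    ((∃ B : ℕ, ¬ ∃ (x y : List A) (q : Q), GapWitness Δ q₀ B x y q) →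
        Determinizable Δ q₀) ∧
      ((∃ Sig : Finset A, ∀ B : ℕ, ∃ (x y : List A) (q : Q),
          (∀ a ∈ x, a ∈ Sig) ∧ (∀ a ∈ y, a ∈ Sig) ∧ GapWitness Δ q₀ B x y q) →
        ¬ Determinizable Δ q₀) ∧
      (Finite A →
        (Determinizable Δ q₀ ↔
          ∃ B : ℕ, ¬ ∃ (x y : List A) (q : Q), GapWitness Δ q₀ B x y q)) := by
  refine ⟨fun h => part1 Δ q₀ h, ?_, ?_⟩
  · rintro ⟨Sig, h⟩
    refine part2 Δ q₀ fun B => ?_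
    obtain ⟨x, y, q, -, -, hg⟩ := h B
    exact ⟨x, y, q, hg⟩
  · intro _
    constructor
    · intro hdet
      by_contra hno
      push_neg at hno
      exact part2 Δ q₀ hno hdet
    · exact fun h => part1 Δ q₀ h
end

section
/- Let S be a finite set, 𝔫 = |S|! and 𝔪 = |S|·𝔫, and let R be a binary relation on S. Then for every s,r ∈ S and every n ≥ 1: (s,r) ∈ R^𝔪 if and only if (s,r) ∈ R^{𝔪·n}. -/
/-- `relPow R j` is the `j`-fold relational composition of `R` with itself
(`relPow R 0` is the identity relation). -/
def relPow {S : Type*} (R : S → S → Prop) : ℕ → S → S → Prop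
  | 0 => fun a b => a = b
  | j + 1 => fun a c => ∃ b, relPow R j a b ∧ R b c

namespace RelPowAux

variable {S : Type*} {R : S → S → Prop}

theorem relPow_congr {a b : ℕ} {s r : S} (h : a = b) (hr : relPow R a s r) :
    relPow R b s r := h ▸ hr

theorem relPow_add {a b : ℕ} {s r : S} :
    relPow R (a + b) s r ↔ ∃ x, relPow R a s x ∧ relPow R b x r := by
  induction b generalizing r with
  | zero =>
    constructor
    · intro h; exact ⟨r, h, rfl⟩
    · rintro ⟨x, hx, h⟩; exact h ▸ hx
  | succ b ih =>
    constructor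
    · rintro ⟨y, hy, hR⟩
      obtain ⟨x, hx, hxy⟩ := ih.mp hy
      exact ⟨x, hx, y, hxy, hR⟩
    · rintro ⟨x, hx, y, hxy, hR⟩
      exact ⟨y, ih.mpr ⟨x, hx, hxy⟩, hR⟩

theorem relPow_comp {a b : ℕ} {s x r : S} (h1 : relPow R a s x) (h2 : relPow R b x r) :
    relPow R (a + b) s r := relPow_add.mpr ⟨x, h1, h2⟩

/-- Extract a chain of vertices from a relational power. -/
theorem exists_chain {L : ℕ} {s r : S} (h : relPow R L s r) :
    ∃ f : ℕ → S, f 0 = s ∧ f L = r ∧ ∀ i, i < L → R (f i) (f (i + 1)) := by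
  induction L generalizing r with
  | zero =>
    have hsr : s = r := h
    exact ⟨fun _ => s, rfl, hsr, fun i hi => absurd hi (by omega)⟩
  | succ L ih =>
    obtain ⟨x, hx, hR⟩ := h
    obtain ⟨f, hf0, hfL, hstep⟩ := ih hx
    refine ⟨fun i => if i ≤ L then f i else r, by simp [hf0], by simp, ?_⟩
    intro i hi
    rcases Nat.lt_or_ge i L with h' | h'
    · simpa [Nat.le_of_lt h', Nat.succ_le_of_lt h'] using hstep i h'
    · have hiL : i = L := by omega
      subst hiL
      simpa [hfL] using hR

theorem chain_segment {L : ℕ} {f : ℕ → S} (hstep : ∀ i, i < L → R (f i) (f (i + 1)))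
    {a : ℕ} (d : ℕ) (h : a + d ≤ L) : relPow R d (f a) (f (a + d)) := by
  induction d with
  | zero => rfl
  | succ d ih =>
    exact ⟨f (a + d), ih (by omega), hstep (a + d) (by omega)⟩

theorem relPow_cycle_pow {c : ℕ} {x : S} (h : relPow R c x x) (k : ℕ) :
    relPow R (k * c) x x := by
  induction k with
  | zero => exact relPow_congr (zero_mul c).symm (show x = x from rfl)
  | succ k ih =>
    exact relPow_congr (by ring) (relPow_comp ih h)

variable [Fintype S]

/-- Pigeonhole: among `N+1` vertices of `S` (with `N = card S`), two coincide. -/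
theorem exists_repeat (g : ℕ → S) :
    ∃ i j, i < j ∧ j ≤ Fintype.card S ∧ g i = g j := by
  obtain ⟨a, b, hab, heq⟩ := Fintype.exists_ne_map_eq_of_card_lt
    (fun i : Fin (Fintype.card S + 1) => g i) (by simp)
  rcases Nat.lt_or_ge (a : ℕ) (b : ℕ) with h | h
  · exact ⟨a, b, h, by omega, heq⟩
  · have h' : (b : ℕ) < (a : ℕ) := by
      rcases Nat.lt_or_ge (b : ℕ) (a : ℕ) with h' | h'
      · exact h'
      · exact absurd (Fin.ext (by omega)) hab
    exact ⟨b, a, h', by omega, heq.symm⟩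

/-- Pumping up: a path of length `L ≥ N` can be lengthened to any `M ≥ L`
with `N! ∣ M - L`. -/
theorem up {L M : ℕ} {s r : S} (h : relPow R L s r) (hL : Fintype.card S ≤ L)
    (hdvd : (Fintype.card S).factorial ∣ M - L) (hML : L ≤ M) :
    relPow R M s r := by
  set N := Fintype.card S with hN
  obtain ⟨f, hf0, hfL, hstep⟩ := exists_chain h
  obtain ⟨i, j, hij, hjN, hg⟩ := exists_repeat f
  set c := j - i with hc
  have hic : i + c = j := by omega
  -- cycle at f i of length c
  have hcyc : relPow R c (f i) (f i) := by
    have := chain_segment hstep c (a := i) (by omega)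
    rw [hic] at this
    exact hg ▸ this
  have hcd : c ∣ (Fintype.card S).factorial :=
    Nat.dvd_factorial (by omega) (by omega)
  obtain ⟨k, hk⟩ : c ∣ M - L := hcd.trans hdvd
  -- pieces
  have seg1 : relPow R i s (f i) := by
    have := chain_segment hstep i (a := 0) (by omega)
    simpa [hf0] using this
  have cycles : relPow R ((k + 1) * c) (f i) (f i) := relPow_cycle_pow hcyc (k + 1)
  have seg3 : relPow R (L - j) (f i) r := by
    have := chain_segment hstep (L - j) (a := j) (by omega)
    rw [show j + (L - j) = L by omega, hfL] at this
    exact hg ▸ this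
  have total := relPow_comp seg1 (relPow_comp cycles seg3)
  refine relPow_congr ?_ total
  obtain ⟨a, ha⟩ : ∃ a, L = j + a := ⟨L - j, by omega⟩
  have hMLk : M = L + c * k := by omega
  have hLj : L - j = a := by omega
  rw [hLj, hMLk, ha, ← hic]
  ring

theorem down (k : ℕ) : ∀ s r : S,
    relPow R ((Fintype.card S + k) * (Fintype.card S).factorial) s r →
    relPow R (Fintype.card S * (Fintype.card S).factorial) s r := by
  set N := Fintype.card S with hN
  set F := N.factorial with hF
  have hF1 : 1 ≤ F := Nat.factorial_pos N
  have hNF : N ≤ F := Nat.self_le_factorial N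
  induction k using Nat.strong_induction_on with
  | _ k ih =>
    intro s r h
    rcases Nat.eq_zero_or_pos k with hk0 | hk1
    · subst hk0; simpa using h
    obtain ⟨f, hf0, hfL, hstep⟩ := exists_chain h
    obtain ⟨i, j, hij, hjN, hg⟩ := exists_repeat (fun t => f (t * F))
    set t := j - i with ht
    have hit : i + t = j := by omega
    -- prefix of length i * F
    have seg1 : relPow R (i * F) s (f (i * F)) := by
      have := chain_segment hstep (i * F) (a := 0)
        (by simpa using Nat.mul_le_mul_right F (by omega : i ≤ N + k))
      simpa [hf0] using this
    -- suffix from j * F of length (N + k - j) * F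
    have seg2 : relPow R ((N + k - j) * F) (f (i * F)) r := by
      have := chain_segment hstep ((N + k - j) * F) (a := j * F)
        (by rw [← Nat.add_mul]; exact Nat.mul_le_mul_right F (by omega))
      rw [← Nat.add_mul, show j + (N + k - j) = N + k by omega, hfL] at this
      exact hg ▸ this
    have total : relPow R ((i + (N + k - j)) * F) s r := by
      refine relPow_congr ?_ (relPow_comp seg1 seg2)
      rw [Nat.add_mul]
    rcases le_or_gt t k with htk | htk
    · -- removed t*F with t ≤ k : still at least N*F, use induction
      have : relPow R ((N + (k - t)) * F) s r :=
        relPow_congr (by congr 1; omega) total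
      exact ih (k - t) (by omega) s r this
    · -- overshoot: length (N - (t - k)) * F with 1 ≤ t - k ≤ N - 1; pump up
      have hd : i + (N + k - j) = N - (t - k) := by omega
      rw [hd] at total
      have hd1 : 1 ≤ N - (t - k) := by omega
      refine up total ?_ ?_ ?_
      · calc N ≤ F := hNF
          _ = 1 * F := (one_mul F).symm
          _ ≤ (N - (t - k)) * F := Nat.mul_le_mul_right F hd1
      · rw [← Nat.sub_mul, ← hF]
        exact dvd_mul_left F _
      · exact Nat.mul_le_mul_right F (by omega)

end RelPowAux

/-- For a relation `R` on a finite set `S`, with `𝔫 = |S|!` and `𝔪 = |S|⬝𝔫`, the relation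
power `R^𝔪` is idempotent: `(s, r) ∈ R^𝔪` iff `(s, r) ∈ R^{𝔪⬝n}`, for every `n ≥ 1`. -/
theorem relPow_card_mul_factorial_idem {S : Type*} [Fintype S] (R : S → S → Prop)
    (𝔫 𝔪 : ℕ) (h𝔫 : 𝔫 = (Fintype.card S).factorial) (h𝔪 : 𝔪 = Fintype.card S * 𝔫)
    (s r : S) (n : ℕ) (hn : 1 ≤ n) :
    relPow R 𝔪 s r ↔ relPow R (𝔪 * n) s r := by
  subst h𝔫 h𝔪
  set N := Fintype.card S with hN
  set F := N.factorial with hF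
  have hF1 : 1 ≤ F := Nat.factorial_pos N
  have hN1 : 1 ≤ N := by
    rw [hN]; exact Fintype.card_pos_iff.mpr ⟨s⟩
  obtain ⟨m, rfl⟩ : ∃ m, n = m + 1 := ⟨n - 1, by omega⟩
  constructor
  · intro h
    refine RelPowAux.up h ?_ ?_ ?_
    · calc N = N * 1 := (mul_one N).symm
        _ ≤ N * F := Nat.mul_le_mul_left N hF1
    · have : N * F * (m + 1) - N * F = F * (N * m) := by
        rw [Nat.mul_succ]
        rw [Nat.add_sub_cancel]
        ring
      rw [this]
      exact Dvd.intro _ rfl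
    · exact Nat.le_mul_of_pos_right _ (by omega)
  · intro h
    refine RelPowAux.down (N * m) s r (RelPowAux.relPow_congr ?_ h)
    rw [← hN, ← hF]
    ring
end

section
/- Let S be a finite set, 𝔫 = |S|!, let R be a binary relation on S, and let S′ ⊆ S satisfy R(S′) ⊆ S′. Then for all n,m ≥ 1: {s ∈ S′ : (s,s) ∈ R^m} ⊆ {s ∈ S′ : (s,s) ∈ R^𝔫} = {s ∈ S′ : (s,s) ∈ R^{𝔫·n}}, and moreover R^𝔫(S′) = R^{𝔫·n}(S′). -/
/-- `relImage R X = R(X)`, the image of the set `X` under the relation `R`. -/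
def relImage {S : Type*} (R : S → S → Prop) (X : Set S) : Set S :=
  {r | ∃ s ∈ X, R s r}

lemma relPow_add {S : Type*} (R : S → S → Prop) (a b : ℕ) (s t : S) :
    relPow R (a + b) s t ↔ ∃ u, relPow R a s u ∧ relPow R b u t := by
  induction b generalizing t with
  | zero => simp [relPow]
  | succ b ih =>
    constructor
    · rintro ⟨c, hc, hct⟩
      obtain ⟨u, h1, h2⟩ := (ih c).mp hc
      exact ⟨u, h1, c, h2, hct⟩
    · rintro ⟨u, h1, c, h2, hct⟩
      exact ⟨c, (ih c).mpr ⟨u, h1, h2⟩, hct⟩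

lemma relPow_mul_self {S : Type*} (R : S → S → Prop) {m : ℕ} {s : S}
    (h : relPow R m s s) (k : ℕ) : relPow R (k * m) s s := by
  induction k with
  | zero => rw [Nat.zero_mul]; exact rfl
  | succ k ih =>
    have : relPow R (k * m + m) s s := (relPow_add R _ _ _ _).mpr ⟨s, ih, h⟩
    simpa [Nat.succ_mul] using this

lemma relPow_of_path {S : Type*} (R : S → S → Prop) {m : ℕ} (f : ℕ → S)
    (hstep : ∀ i < m, R (f i) (f (i + 1))) :
    ∀ i d, i + d ≤ m → relPow R d (f i) (f (i + d)) := by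
  intro i d
  induction d with
  | zero => intro _; exact rfl
  | succ d ih =>
    intro h
    exact ⟨f (i + d), ih (by omega), by
      have := hstep (i + d) (by omega)
      simpa [Nat.add_assoc] using this⟩

lemma relPow_iff_path {S : Type*} (R : S → S → Prop) (m : ℕ) (a b : S) :
    relPow R m a b ↔ ∃ f : ℕ → S, f 0 = a ∧ f m = b ∧ ∀ i < m, R (f i) (f (i + 1)) := by
  constructor
  · induction m generalizing b with
    | zero => intro h; exact ⟨fun _ => a, rfl, h, fun i hi => absurd hi (by omega)⟩
    | succ m ih =>
      rintro ⟨c, hc, hcb⟩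
      obtain ⟨f, hf0, hfm, hstep⟩ := ih c hc
      refine ⟨fun i => if i = m + 1 then b else f i, by simp [hf0], by simp, ?_⟩
      intro i hi
      rcases Nat.lt_or_ge i m with h | h
      · simpa [Nat.ne_of_lt (by omega : i < m + 1), Nat.ne_of_lt (by omega : i + 1 < m + 1), Nat.ne_of_lt h]
          using hstep i h
      · have : i = m := by omega
        subst this
        simpa [Nat.ne_of_lt (by omega : i < i + 1), hfm] using hcb
  · rintro ⟨f, hf0, hfm, hstep⟩
    have := relPow_of_path R f hstep 0 m (by omega)
    simpa [hf0, hfm] using this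

/-- Pumping: if there is an `R`-path of length `m` from `a` to `b` with a repeat
at positions `i < j ≤ m`, then there is a path of length `i + k*(j-i) + (m-j)`
for every `k`. -/
lemma relPow_pump {S : Type*} (R : S → S → Prop) {m : ℕ} {a b : S} (f : ℕ → S)
    (hf0 : f 0 = a) (hfm : f m = b) (hstep : ∀ i < m, R (f i) (f (i + 1)))
    {i j : ℕ} (hij : i < j) (hjm : j ≤ m) (heq : f i = f j) (k : ℕ) :
    relPow R (i + k * (j - i) + (m - j)) a b := by
  have h1 : relPow R i a (f i) := by
    have := relPow_of_path R f hstep 0 i (by omega); simpa [hf0] using this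
  have hloop : relPow R (j - i) (f i) (f i) := by
    have := relPow_of_path R f hstep i (j - i) (by omega)
    rw [show i + (j - i) = j by omega, ← heq] at this
    exact this
  have h2 : relPow R (k * (j - i)) (f i) (f i) := relPow_mul_self R hloop k
  have h3 : relPow R (m - j) (f i) b := by
    have := relPow_of_path R f hstep j (m - j) (by omega)
    rw [show j + (m - j) = m by omega, hfm, ← heq] at this
    exact this
  exact (relPow_add R _ _ _ _).mpr ⟨f i, (relPow_add R _ _ _ _).mpr ⟨f i, h1, h2⟩, h3⟩

/-- Any nonempty loop yields a loop of length at most `Fintype.card S`. -/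
lemma loop_short {S : Type*} [Fintype S] (R : S → S → Prop) :
    ∀ m, 1 ≤ m → ∀ s : S, relPow R m s s →
      ∃ ℓ, 1 ≤ ℓ ∧ ℓ ≤ Fintype.card S ∧ relPow R ℓ s s := by
  intro m
  induction m using Nat.strong_induction_on with
  | _ m ih =>
    intro hm s h
    rcases le_or_gt m (Fintype.card S) with hle | hlt
    · exact ⟨m, hm, hle, h⟩
    · obtain ⟨f, hf0, hfm, hstep⟩ := (relPow_iff_path R m s s).mp h
      have : ¬ Function.Injective (fun x : Fin m => f x.1) := by
        intro hinj
        have := Fintype.card_le_of_injective _ hinj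
        simp at this; omega
      rw [Function.not_injective_iff] at this
      obtain ⟨x, y, hxy, hne⟩ := this
      -- wlog x < y
      rcases Nat.lt_or_ge x.1 y.1 with hlt' | hge
      · have hnew : relPow R (x.1 + 0 * (y.1 - x.1) + (m - y.1)) s s :=
          relPow_pump R f hf0 hfm hstep hlt' (by omega) hxy 0
        have h1 : 1 ≤ x.1 + 0 * (y.1 - x.1) + (m - y.1) := by
          have := y.2; omega
        have h2 : x.1 + 0 * (y.1 - x.1) + (m - y.1) < m := by
          have := y.2; omega
        exact ih _ h2 h1 s hnew
      · have hlt' : y.1 < x.1 := by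
          rcases Nat.lt_or_ge y.1 x.1 with h | h
          · exact h
          · exact absurd (Fin.ext (by omega)) hne
        have hnew : relPow R (y.1 + 0 * (x.1 - y.1) + (m - x.1)) s s :=
          relPow_pump R f hf0 hfm hstep hlt' (by omega) hxy.symm 0
        have h1 : 1 ≤ y.1 + 0 * (x.1 - y.1) + (m - x.1) := by
          have := x.2; omega
        have h2 : y.1 + 0 * (x.1 - y.1) + (m - x.1) < m := by
          have := x.2; omega
        exact ih _ h2 h1 s hnew

lemma loop_factorial {S : Type*} [Fintype S] (R : S → S → Prop) {m : ℕ} {s : S}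
    (hm : 1 ≤ m) (h : relPow R m s s) :
    relPow R (Fintype.card S).factorial s s := by
  obtain ⟨ℓ, hℓ1, hℓc, hloop⟩ := loop_short R m hm s h
  have hdvd : ℓ ∣ (Fintype.card S).factorial := Nat.dvd_factorial hℓ1 hℓc
  obtain ⟨q, hq⟩ := hdvd
  rw [hq, Nat.mul_comm]
  exact relPow_mul_self R hloop q

lemma relPow_mem_closed {S : Type*} (R : S → S → Prop) (S' : Set S)
    (hcl : relImage R S' ⊆ S') {k : ℕ} {s t : S} (hs : s ∈ S')
    (h : relPow R k s t) : t ∈ S' := by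
  induction k generalizing t with
  | zero => rwa [← h]
  | succ k ih =>
    obtain ⟨u, hu, hut⟩ := h
    exact hcl ⟨u, ih hu, hut⟩

/-- Stabilization of reflexive states and of the reachability set of a reflexive cycle:
if `R(S') ⊆ S'` and `𝔫 = |S|!`, then for all `n, m ≥ 1` the reflexive states of `R^m`
in `S'` are contained in those of `R^𝔫`, which coincide with those of `R^{𝔫⬝n}`, and
`R^𝔫(S') = R^{𝔫⬝n}(S')`. -/
theorem reflexive_cycle_stabilize {S : Type*} [Fintype S] (R : S → S → Prop)
    (𝔫 : ℕ) (h𝔫 : 𝔫 = (Fintype.card S).factorial)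
    (S' : Set S) (hcl : relImage R S' ⊆ S')
    (n m : ℕ) (hn : 1 ≤ n) (hm : 1 ≤ m) :
    {s ∈ S' | relPow R m s s} ⊆ {s ∈ S' | relPow R 𝔫 s s} ∧
    {s ∈ S' | relPow R 𝔫 s s} = {s ∈ S' | relPow R (𝔫 * n) s s} ∧
    relImage (relPow R 𝔫) S' = relImage (relPow R (𝔫 * n)) S' := by
  have h𝔫pos : 1 ≤ 𝔫 := by rw [h𝔫]; exact Nat.factorial_pos _
  refine ⟨?_, ?_, ?_⟩
  · rintro s ⟨hs, hloop⟩
    exact ⟨hs, h𝔫 ▸ loop_factorial R hm hloop⟩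
  · ext s
    constructor
    · rintro ⟨hs, hloop⟩
      exact ⟨hs, by rw [Nat.mul_comm]; exact relPow_mul_self R hloop n⟩
    · rintro ⟨hs, hloop⟩
      exact ⟨hs, h𝔫 ▸ loop_factorial R (Nat.mul_pos h𝔫pos hn) hloop⟩
  · ext r
    constructor
    · rintro ⟨s, hs, hsr⟩
      -- pump the path of length 𝔫 up to length 𝔫 * n
      obtain ⟨f, hf0, hfm, hstep⟩ := (relPow_iff_path R 𝔫 s r).mp hsr
      have hcard : Fintype.card S ≤ 𝔫 := h𝔫 ▸ Nat.self_le_factorial _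
      -- pigeonhole on first (card S + 1) points
      have : ¬ Function.Injective (fun x : Fin (Fintype.card S + 1) => f x.1) := by
        intro hinj
        have := Fintype.card_le_of_injective _ hinj
        simp at this
      rw [Function.not_injective_iff] at this
      obtain ⟨x, y, hxy, hne⟩ := this
      -- wlog x < y
      obtain ⟨i, j, hij, heq, hjc⟩ :
          ∃ i j : ℕ, i < j ∧ f i = f j ∧ j ≤ Fintype.card S := by
        rcases Nat.lt_or_ge x.1 y.1 with h | h
        · exact ⟨x.1, y.1, h, hxy, by have := y.2; omega⟩
        · have : y.1 < x.1 := by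
            rcases Nat.lt_or_ge y.1 x.1 with h' | h'
            · exact h'
            · exact absurd (Fin.ext (by omega)) hne
          exact ⟨y.1, x.1, this, hxy.symm, by have := x.2; omega⟩
      set ℓ := j - i with hℓ
      have hdvd : ℓ ∣ 𝔫 := h𝔫 ▸ Nat.dvd_factorial (by omega) (by omega)
      obtain ⟨q, hq⟩ := hdvd
      set k := 1 + q * (n - 1) with hk
      have hpump := relPow_pump R f hf0 hfm hstep hij (by omega) heq k
      have harith : i + k * ℓ + (𝔫 - j) = 𝔫 * n := by
        have e1 : k * ℓ = ℓ + 𝔫 * (n - 1) := by rw [hk, hq]; ring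
        have e2 : 𝔫 * n = 𝔫 + 𝔫 * (n - 1) := by
          obtain ⟨n', rfl⟩ : ∃ n', n = n' + 1 := ⟨n - 1, by omega⟩
          rw [Nat.add_sub_cancel, Nat.mul_add, Nat.mul_one, Nat.add_comm]
        have hjn : j ≤ 𝔫 := le_trans hjc hcard
        omega
      rw [harith] at hpump
      exact ⟨s, hs, hpump⟩
    · rintro ⟨s, hs, hsr⟩
      have : 𝔫 * n = 𝔫 * (n - 1) + 𝔫 := by
        have : n = (n - 1) + 1 := by omega
        nth_rewrite 1 [this]; ring
      rw [this] at hsr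
      obtain ⟨t, h1, h2⟩ := (relPow_add R _ _ _ _).mp hsr
      exact ⟨t, relPow_mem_closed R S' hcl hs h1, h2⟩
end

section
/- Let A ∈ ℤ∞^{S×S} be a stable-cycle matrix. Then for all n,m ≥ 1: MinStates(A^m) ⊆ MinStates(A^𝔫) = MinStates(A^{𝔫·n}). -/
set_option linter.unusedSectionVars false

/-- `𝔫 = |S|!`. -/
def nfac (S : Type*) [Fintype S] : ℕ := (Fintype.card S).factorial

/-- `𝔪 = |S| ⬝ 𝔫`. -/
def mfac (S : Type*) [Fintype S] : ℕ := Fintype.card S * nfac S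

/-- The `(s, r)` entry of a min-plus matrix, as an element of `ℤ∞`.
Matrices over `Tropical ZInf` are multiplied in the min-plus (tropical) semiring:
`(A * B) s r = min_t (A s t + B t r)`, and `A ^ n` is the `n`-fold min-plus power. -/
def en {S : Type*} (A : Matrix S S (Tropical ZInf)) (s r : S) : ZInf :=
  (A s r).untrop

/-- `A` is a stable-cycle matrix with baseline `s₀`: for every `n ≥ 1`, `(A^n)_{s₀,s₀} = 0`
and `(A^n)_{r,r} ≥ 0` for every `r`. -/
def IsStableCycle {S : Type*} [Fintype S] [DecidableEq S]
    (A : Matrix S S (Tropical ZInf)) (s₀ : S) : Prop :=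
  ∀ n : ℕ, 1 ≤ n → en (A ^ n) s₀ s₀ = 0 ∧ ∀ r : S, 0 ≤ en (A ^ n) r r

/-- `MinStates B = {r : B_{r,r} = 0}`. -/
def MinStates {S : Type*} (B : Matrix S S (Tropical ZInf)) : Set S :=
  {r | en B r r = 0}

section Aux

variable {S : Type*} [Fintype S] [DecidableEq S]

lemma en_mul_le (B C : Matrix S S (Tropical ZInf)) (s t u : S) :
    en (B * C) s u ≤ en B s t + en C t u := by
  unfold en
  rw [Matrix.mul_apply, Finset.untrop_sum']
  exact (Finset.inf_le (Finset.mem_univ t)).trans (le_of_eq (Tropical.untrop_mul _ _))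

lemma en_mul_exists [Nonempty S] (B C : Matrix S S (Tropical ZInf)) (s u : S) :
    ∃ t, en (B * C) s u = en B s t + en C t u := by
  unfold en
  rw [Matrix.mul_apply, Finset.untrop_sum', ← Finset.inf'_eq_inf Finset.univ_nonempty]
  obtain ⟨t, _, ht⟩ := Finset.exists_mem_eq_inf' Finset.univ_nonempty
    (Function.comp Tropical.untrop fun t => B s t * C t u)
  exact ⟨t, by rw [ht]; exact Tropical.untrop_mul _ _⟩

/-- Weight of a path of length `m` given by `f`. -/
def W (A : Matrix S S (Tropical ZInf)) (f : ℕ → S) (m : ℕ) : ZInf :=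
  ∑ i ∈ Finset.range m, en A (f i) (f (i + 1))

lemma en_pow_le_path (A : Matrix S S (Tropical ZInf)) (f : ℕ → S) (m : ℕ) :
    en (A ^ m) (f 0) (f m) ≤ W A f m := by
  induction m with
  | zero =>
      simp only [pow_zero, W, Finset.range_zero, Finset.sum_empty]
      unfold en
      rw [Matrix.one_apply_eq]
      exact le_of_eq Tropical.untrop_one
  | succ m ih =>
      rw [pow_succ]
      calc en (A ^ m * A) (f 0) (f (m + 1))
          ≤ en (A ^ m) (f 0) (f m) + en A (f m) (f (m + 1)) := en_mul_le _ _ _ _ _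
        _ ≤ W A f m + en A (f m) (f (m + 1)) := add_le_add_left ih _
        _ = W A f (m + 1) := (Finset.sum_range_succ _ _).symm

lemma path_exists (A : Matrix S S (Tropical ZInf)) (s : S) :
    ∀ m, ∀ u : S, ∃ f : ℕ → S, f 0 = s ∧ f (m + 1) = u ∧
      en (A ^ (m + 1)) s u = W A f (m + 1) := by
  intro m
  induction m with
  | zero =>
      intro u
      refine ⟨fun i => if i = 0 then s else u, by simp, by simp, ?_⟩
      simp [W, Finset.sum_range_one, pow_one]
  | succ m ih =>
      intro u
      have : Nonempty S := ⟨s⟩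
      have hsplit : A ^ (m + 2) = A ^ (m + 1) * A := by rw [pow_succ]
      obtain ⟨t, ht⟩ := en_mul_exists (A ^ (m + 1)) A s u
      obtain ⟨f, hf0, hfm, hfw⟩ := ih t
      set g : ℕ → S := fun i => if i ≤ m + 1 then f i else u with hg
      have hg1 : g (m + 1) = t := by rw [hg]; simp [hfm]
      have hg2 : g (m + 2) = u := by rw [hg]; simp
      refine ⟨g, by rw [hg]; simp [hf0], hg2, ?_⟩
      have hcong : ∀ i ∈ Finset.range (m + 1),
          en A (g i) (g (i + 1)) = en A (f i) (f (i + 1)) := by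
        intro i hi
        have hi' := Finset.mem_range.mp hi
        rw [hg]
        simp only
        rw [if_pos (by omega), if_pos (by omega)]
      rw [hsplit, ht, hfw]
      show _ = ∑ i ∈ Finset.range (m + 2), en A (g i) (g (i + 1))
      rw [Finset.sum_range_succ, Finset.sum_congr rfl hcong, hg1, hg2]
      rfl

lemma en_pow_le_subpath (A : Matrix S S (Tropical ZInf)) (f : ℕ → S) {a b : ℕ} (hab : a ≤ b) :
    en (A ^ (b - a)) (f a) (f b) ≤ ∑ i ∈ Finset.Ico a b, en A (f i) (f (i + 1)) := by
  have h := en_pow_le_path A (fun i => f (a + i)) (b - a)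
  rw [Nat.add_zero, Nat.add_sub_cancel' hab] at h
  rw [Finset.sum_Ico_eq_sum_range]
  exact h

/-- Splitting off a cycle from a zero-weight closed path. -/
lemma zero_of_split (A : Matrix S S (Tropical ZInf)) (s₀ : S) (hA : IsStableCycle A s₀)
    (r : S) {m a b : ℕ} (f : ℕ → S) (hf0 : f 0 = r) (hfm : f m = r)
    (hw : W A f m = 0) (hab : a < b) (hbm : b < m) (heq : f a = f b) :
    en (A ^ (a + (m - b))) r r = 0 := by
  set w1 := ∑ i ∈ Finset.Ico 0 a, en A (f i) (f (i + 1)) with hw1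
  set w2 := ∑ i ∈ Finset.Ico a b, en A (f i) (f (i + 1)) with hw2
  set w3 := ∑ i ∈ Finset.Ico b m, en A (f i) (f (i + 1)) with hw3
  have hsum : w1 + w2 + w3 = 0 := by
    rw [hw1, hw2, hw3, Finset.sum_Ico_consecutive _ (Nat.zero_le a) (le_of_lt hab),
      Finset.sum_Ico_consecutive _ (Nat.zero_le b) (le_of_lt hbm), ← Finset.range_eq_Ico]
    exact hw
  have h2 : (0 : ZInf) ≤ w2 := by
    have hs := en_pow_le_subpath A f (le_of_lt hab)
    rw [← heq] at hs
    exact le_trans ((hA (b - a) (by omega)).2 (f a)) hs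
  have h1 : en (A ^ a) r (f a) ≤ w1 := by
    have hs := en_pow_le_subpath A f (Nat.zero_le a)
    rwa [Nat.sub_zero, hf0] at hs
  have h3 : en (A ^ (m - b)) (f a) r ≤ w3 := by
    have hs := en_pow_le_subpath A f (le_of_lt hbm)
    rwa [hfm, ← heq] at hs
  have h13 : en (A ^ (a + (m - b))) r r ≤ w1 + w3 := by
    rw [pow_add]
    exact le_trans (en_mul_le _ _ _ (f a) _) (add_le_add h1 h3)
  have hle : w1 + w3 ≤ 0 := by
    calc w1 + w3 = w1 + 0 + w3 := by rw [add_zero]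
      _ ≤ w1 + w2 + w3 := add_le_add_left (add_le_add_right h2 w1) w3
      _ = 0 := hsum
  exact le_antisymm (h13.trans hle) ((hA _ (by omega)).2 r)

/-- Key reduction: a zero diagonal entry at some power yields one at a power `≤ |S|`. -/
lemma reduce (A : Matrix S S (Tropical ZInf)) (s₀ : S) (hA : IsStableCycle A s₀) (r : S) :
    ∀ m, 1 ≤ m → en (A ^ m) r r = 0 →
      ∃ ℓ, 1 ≤ ℓ ∧ ℓ ≤ Fintype.card S ∧ en (A ^ ℓ) r r = 0 := by
  intro m
  induction m using Nat.strong_induction_on with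
  | _ m IH =>
  intro hm hzero
  by_cases hms : m ≤ Fintype.card S
  · exact ⟨m, hm, hms, hzero⟩
  push_neg at hms
  obtain ⟨m', rfl⟩ : ∃ m', m = m' + 1 := ⟨m - 1, by omega⟩
  obtain ⟨f, hf0, hfm, hfw⟩ := path_exists A r m' r
  set m := m' + 1 with hmdef
  have hw : W A f m = 0 := by rw [← hfw]; exact hzero
  have hcard : Fintype.card S < Fintype.card (Fin (Fintype.card S + 1)) := by simp
  obtain ⟨i, j, hij, hfij⟩ :=
    Fintype.exists_ne_map_eq_of_card_lt (fun k : Fin (Fintype.card S + 1) => f k) hcard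
  have key : ∀ a b : ℕ, a < b → b ≤ Fintype.card S → f a = f b →
      ∃ ℓ, 1 ≤ ℓ ∧ ℓ ≤ Fintype.card S ∧ en (A ^ ℓ) r r = 0 := by
    intro a b hab hbS heq
    have hbm : b < m := by omega
    have h0 := zero_of_split A s₀ hA r f hf0 hfm hw hab hbm heq
    exact IH (a + (m - b)) (by omega) (by omega) h0
  rcases lt_or_gt_of_ne hij with hlt | hlt
  · exact key i j hlt (by omega) hfij
  · exact key j i hlt (by omega) hfij.symm

lemma en_pow_mul_le (A : Matrix S S (Tropical ZInf)) (r : S) {ℓ : ℕ}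
    (h0 : en (A ^ ℓ) r r = 0) : ∀ k, 1 ≤ k → en (A ^ (k * ℓ)) r r ≤ 0 := by
  intro k
  induction k with
  | zero => omega
  | succ k ih =>
      intro _
      by_cases hk : 1 ≤ k
      · have : A ^ ((k + 1) * ℓ) = A ^ (k * ℓ) * A ^ ℓ := by
          rw [← pow_add]; ring_nf
        rw [this]
        calc en (A ^ (k * ℓ) * A ^ ℓ) r r ≤ en (A ^ (k * ℓ)) r r + en (A ^ ℓ) r r :=
              en_mul_le _ _ _ r _
          _ ≤ 0 + 0 := add_le_add (ih hk) (le_of_eq h0)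
          _ = 0 := add_zero 0
      · have hk0 : k = 0 := by omega
        subst hk0
        rw [show (0 + 1) * ℓ = ℓ by ring]
        exact le_of_eq h0

end Aux

/-- Stabilization of minimal reflexive states of a stable cycle:
`MinStates (A^m) ⊆ MinStates (A^𝔫) = MinStates (A^{𝔫⬝n})` for all `n, m ≥ 1`. -/
theorem minStates_stabilize {S : Type*} [Fintype S] [DecidableEq S]
    (A : Matrix S S (Tropical ZInf)) (s₀ : S) (hA : IsStableCycle A s₀)
    (n m : ℕ) (hn : 1 ≤ n) (hm : 1 ≤ m) :
    MinStates (A ^ m) ⊆ MinStates (A ^ nfac S) ∧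
    MinStates (A ^ nfac S) = MinStates (A ^ (nfac S * n)) := by
  have hnf : 1 ≤ nfac S := Nat.factorial_pos _
  have hzero : ∀ (r : S) (k : ℕ), 1 ≤ k → en (A ^ k) r r = 0 →
      en (A ^ nfac S) r r = 0 := by
    intro r k hk h
    obtain ⟨ℓ, hℓ1, hℓS, hℓ0⟩ := reduce A s₀ hA r k hk h
    obtain ⟨c, hc⟩ := Nat.dvd_factorial hℓ1 hℓS
    have hc1 : 1 ≤ c := by
      rcases Nat.eq_zero_or_pos c with h0 | h; · rw [h0, mul_zero] at hc; unfold nfac at *; omega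
      exact h
    have hle : en (A ^ nfac S) r r ≤ 0 := by
      have := en_pow_mul_le A r hℓ0 c hc1
      rwa [mul_comm, ← hc] at this
    exact le_antisymm hle ((hA _ hnf).2 r)
  constructor
  · intro r hr
    exact hzero r m hm hr
  · ext r
    constructor
    · intro hr
      have hr' : en (A ^ nfac S) r r = 0 := hr
      have := en_pow_mul_le A r hr' n hn
      rw [mul_comm] at this
      have h1 : 1 ≤ nfac S * n := Nat.one_le_iff_ne_zero.mpr (by positivity)
      exact le_antisymm this ((hA _ h1).2 r)
    · intro hr
      have h1 : 1 ≤ nfac S * n := Nat.one_le_iff_ne_zero.mpr (by positivity)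
      exact hzero r (nfac S * n) h1 hr
end

section
/- Let A ∈ ℤ∞^{S×S} be a stable-cycle matrix. Then for all n,m ≥ 1: PltPairs(A^{m·𝔫}) ⊆ PltPairs(A^𝔪) = PltPairs(A^{𝔪·n}); moreover, for every (s,r) ∈ PltPairs(A^{m·𝔫}) one has (A^{m·𝔫})_{s,r} ≥ (A^𝔪)_{s,r} = (A^{n·𝔪})_{s,r}. -/
/-- The plateau pairs of `B`: `(s, r)` with `r ∈ MinStates B` and `B_{s,r} < ∞`. -/
def PltPairs {S : Type*} (B : Matrix S S (Tropical ZInf)) : Set (S × S) :=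
  {p | p.2 ∈ MinStates B ∧ en B p.1 p.2 < ⊤}

namespace PltAux
set_option linter.unusedSectionVars false
variable {S : Type*} [Fintype S] [DecidableEq S]

lemma untrop_sum_eq_inf (s : Finset S) (f : S → Tropical ZInf) :
    Tropical.untrop (∑ i ∈ s, f i) = s.inf (fun i => Tropical.untrop (f i)) := by
  induction s using Finset.cons_induction with
  | empty => simp
  | cons a s ha ih => rw [Finset.sum_cons, Tropical.untrop_add, ih, Finset.inf_cons]

lemma en_mul_le (M N : Matrix S S (Tropical ZInf)) (s t r : S) :
    en (M * N) s r ≤ en M s t + en N t r := by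
  rw [show en (M * N) s r = Finset.univ.inf (fun u => en M s u + en N u r) by
    rw [en, Matrix.mul_apply, untrop_sum_eq_inf]; congr 1]
  exact Finset.inf_le (Finset.mem_univ t)

lemma exists_en_mul [Nonempty S] (M N : Matrix S S (Tropical ZInf)) (s r : S) :
    ∃ u, en (M * N) s r = en M s u + en N u r := by
  have h : en (M * N) s r = Finset.univ.inf (fun u => en M s u + en N u r) := by
    rw [en, Matrix.mul_apply, untrop_sum_eq_inf]; congr 1
  obtain ⟨u, _, hu⟩ := Finset.exists_mem_eq_inf Finset.univ Finset.univ_nonempty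
    (fun u => en M s u + en N u r)
  exact ⟨u, by rw [h, hu]⟩

lemma en_one_diag (x : S) : en (1 : Matrix S S (Tropical ZInf)) x x = 0 := by
  simp [en, Matrix.one_apply]

lemma en_pow_add_le (A : Matrix S S (Tropical ZInf)) (a b : ℕ) (x y z : S) :
    en (A ^ (a + b)) x z ≤ en (A ^ a) x y + en (A ^ b) y z := by
  rw [pow_add]; exact en_mul_le _ _ _ _ _

/-- segment bound -/
lemma en_le_walk (A : Matrix S S (Tropical ZInf)) (t : ℕ → S) (a k : ℕ) :
    en (A ^ k) (t a) (t (a + k)) ≤ ∑ i ∈ Finset.Ico a (a + k), en A (t i) (t (i + 1)) := by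
  induction k with
  | zero => simp [en_one_diag]
  | succ k ih =>
      have h1 : en (A ^ (k + 1)) (t a) (t (a + k + 1)) ≤
          en (A ^ k) (t a) (t (a + k)) + en (A ^ 1) (t (a + k)) (t (a + k + 1)) :=
        en_pow_add_le A k 1 _ _ _
      rw [pow_one] at h1
      rw [show a + (k + 1) = (a + k) + 1 from rfl, Finset.sum_Ico_succ_top (Nat.le_add_right a k)]
      exact h1.trans (add_le_add_left ih _)

/-- walk existence -/
lemma exists_walk (A : Matrix S S (Tropical ZInf)) (k : ℕ) (hk : 1 ≤ k) (s r : S) :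
    ∃ t : ℕ → S, t 0 = s ∧ t k = r ∧
      ∑ i ∈ Finset.Ico 0 k, en A (t i) (t (i + 1)) ≤ en (A ^ k) s r := by
  induction k, hk using Nat.le_induction generalizing r with
  | base =>
      refine ⟨fun i => if i = 0 then s else r, by simp, by simp, ?_⟩
      simp [pow_one]
  | succ k hk ih =>
      haveI : Nonempty S := ⟨s⟩
      have hpow : A ^ (k + 1) = A ^ k * A := pow_succ A k
      obtain ⟨u, hu⟩ := exists_en_mul (A ^ k) A s r
      obtain ⟨t, ht0, htk, hw⟩ := ih u
      refine ⟨fun i => if i ≤ k then t i else r, by simp [ht0], by simp, ?_⟩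
      rw [Finset.sum_Ico_succ_top (Nat.zero_le k)]
      have hedge : en A (if k ≤ k then t k else r) (if k + 1 ≤ k then t (k+1) else r)
          = en A u r := by simp [htk]
      have hsum : ∑ i ∈ Finset.Ico 0 k,
          en A (if i ≤ k then t i else r) (if i + 1 ≤ k then t (i+1) else r)
          = ∑ i ∈ Finset.Ico 0 k, en A (t i) (t (i + 1)) := by
        refine Finset.sum_congr rfl (fun i hi => ?_)
        have : i < k := (Finset.mem_Ico.mp hi).2
        rw [if_pos (by omega), if_pos (by omega)]
      rw [hedge, hsum, hpow, hu]
      exact add_le_add_left hw _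

lemma en_diag_rep (A : Matrix S S (Tropical ZInf)) (d : ℕ) (x : S)
    (h : en (A ^ d) x x ≤ 0) : ∀ k, 1 ≤ k → en (A ^ (k * d)) x x ≤ 0 := by
  intro k hk
  induction k, hk using Nat.le_induction with
  | base => rwa [one_mul]
  | succ k hk ih =>
      have : en (A ^ (k * d + d)) x x ≤ en (A ^ (k * d)) x x + en (A ^ d) x x :=
        en_pow_add_le A _ _ _ x _
      rw [show (k + 1) * d = k * d + d by ring]
      calc en (A ^ (k * d + d)) x x ≤ en (A ^ (k * d)) x x + en (A ^ d) x x := this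
        _ ≤ 0 + 0 := add_le_add ih h
        _ = 0 := add_zero 0

lemma pigeon (c : ℕ) (f : ℕ → S) (hc : Fintype.card S ≤ c) :
    ∃ i j : ℕ, i < j ∧ j ≤ c ∧ f i = f j := by
  have hcard : Fintype.card S < Fintype.card (Fin (c + 1)) := by simpa using Nat.lt_succ_of_le hc
  obtain ⟨a, b, hab, heq⟩ :=
    Fintype.exists_ne_map_eq_of_card_lt (fun i : Fin (c + 1) => f (i : ℕ)) hcard
  rcases lt_trichotomy (a : ℕ) (b : ℕ) with h | h | h
  · exact ⟨a, b, h, Nat.lt_succ_iff.mp b.isLt, heq⟩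
  · exact absurd (Fin.ext h) hab
  · exact ⟨b, a, h, Nat.lt_succ_iff.mp a.isLt, heq.symm⟩

/-- If some positive power has nonpositive `(r,r)` entry, so does `A ^ nfac S`. -/
lemma diag_to_nfac (A : Matrix S S (Tropical ZInf))
    (hd : ∀ k, 1 ≤ k → ∀ x : S, 0 ≤ en (A ^ k) x x) :
    ∀ N, 1 ≤ N → ∀ r : S, en (A ^ N) r r ≤ 0 → en (A ^ nfac S) r r ≤ 0 := by
  intro N
  induction N using Nat.strong_induction_on with
  | _ N ihN =>
    intro hN r hr
    by_cases hle : N ≤ Fintype.card S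
    · obtain ⟨k, hk⟩ : N ∣ nfac S := Nat.dvd_factorial hN hle
      have hk1 : 1 ≤ k := by
        rcases Nat.eq_zero_or_pos k with h0 | h; · simp [h0] at hk; exact absurd hk (Nat.factorial_pos _).ne'
        · exact h
      have := en_diag_rep A N r hr k hk1
      rwa [show nfac S = k * N by rw [hk]; ring]
    · push_neg at hle
      obtain ⟨t, ht0, htN, hw⟩ := exists_walk A N hN r r
      obtain ⟨i, j, hij, hjc, hteq⟩ := pigeon (Fintype.card S) t le_rfl
      have hjN : j ≤ N := hjc.trans hle.le
      -- segment bounds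
      have h1 : en (A ^ i) r (t i) ≤ ∑ x ∈ Finset.Ico 0 i, en A (t x) (t (x + 1)) := by
        have := en_le_walk A t 0 i
        rwa [Nat.zero_add, ht0] at this
      have h2 : en (A ^ (N - j)) (t j) r ≤ ∑ x ∈ Finset.Ico j N, en A (t x) (t (x + 1)) := by
        have := en_le_walk A t j (N - j)
        rwa [Nat.add_sub_cancel' hjN, htN] at this
      have h3 : (0 : ZInf) ≤ ∑ x ∈ Finset.Ico i j, en A (t x) (t (x + 1)) := by
        have hseg := en_le_walk A t i (j - i)
        rw [Nat.add_sub_cancel' hij.le] at hseg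
        rw [← hteq] at hseg
        exact (hd (j - i) (by omega) (t i)).trans hseg
      -- combine
      have hsplit : ∑ x ∈ Finset.Ico 0 i, en A (t x) (t (x + 1))
            + ∑ x ∈ Finset.Ico i j, en A (t x) (t (x + 1))
            + ∑ x ∈ Finset.Ico j N, en A (t x) (t (x + 1))
          = ∑ x ∈ Finset.Ico 0 N, en A (t x) (t (x + 1)) := by
        rw [Finset.sum_Ico_consecutive _ (Nat.zero_le i) hij.le,
          Finset.sum_Ico_consecutive _ (Nat.zero_le j) hjN]
      have hkey : en (A ^ (i + (N - j))) r r ≤ 0 := by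
        calc en (A ^ (i + (N - j))) r r
            ≤ en (A ^ i) r (t i) + en (A ^ (N - j)) (t i) r := en_pow_add_le A _ _ _ _ _
          _ = en (A ^ i) r (t i) + en (A ^ (N - j)) (t j) r := by rw [hteq]
          _ ≤ (∑ x ∈ Finset.Ico 0 i, en A (t x) (t (x + 1)))
              + ∑ x ∈ Finset.Ico j N, en A (t x) (t (x + 1)) := add_le_add h1 h2
          _ ≤ (∑ x ∈ Finset.Ico 0 i, en A (t x) (t (x + 1)))
              + ((∑ x ∈ Finset.Ico i j, en A (t x) (t (x + 1)))
                + ∑ x ∈ Finset.Ico j N, en A (t x) (t (x + 1))) := by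
              exact add_le_add_right (le_add_of_nonneg_left h3) _
          _ = ∑ x ∈ Finset.Ico 0 N, en A (t x) (t (x + 1)) := by rw [← hsplit, add_assoc]
          _ ≤ en (A ^ N) r r := hw
          _ ≤ 0 := hr
      exact ihN (i + (N - j)) (by omega) (by omega) r hkey

/-- entry at exponent `card * nfac` is minimal among exponents `m * nfac`. -/
lemma main_le (A : Matrix S S (Tropical ZInf))
    (hd : ∀ k, 1 ≤ k → ∀ x : S, 0 ≤ en (A ^ k) x x)
    (s r : S) (hr : en (A ^ nfac S) r r ≤ 0) :
    ∀ m, 1 ≤ m → en (A ^ (Fintype.card S * nfac S)) s r ≤ en (A ^ (m * nfac S)) s r := by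
  have hF1 : 1 ≤ nfac S := (Nat.factorial_pos _)
  have hrk : ∀ k, 1 ≤ k → en (A ^ (k * nfac S)) r r = 0 := by
    intro k hk
    exact le_antisymm (en_diag_rep A (nfac S) r hr k hk) (hd _ (Nat.mul_pos (by omega) hF1) r)
  intro m
  induction m using Nat.strong_induction_on with
  | _ m ihm =>
    intro hm
    rcases le_or_gt m (Fintype.card S) with hle | hlt
    · rcases eq_or_lt_of_le hle with heq | hlt'
      · rw [heq]
      · have h1 : Fintype.card S * nfac S = m * nfac S + (Fintype.card S - m) * nfac S := by
          rw [← add_mul]; congr 1; omega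
        calc en (A ^ (Fintype.card S * nfac S)) s r
            = en (A ^ (m * nfac S + (Fintype.card S - m) * nfac S)) s r := by rw [h1]
          _ ≤ en (A ^ (m * nfac S)) s r + en (A ^ ((Fintype.card S - m) * nfac S)) r r :=
              en_pow_add_le A _ _ _ _ _
          _ = en (A ^ (m * nfac S)) s r + 0 := by rw [hrk _ (by omega)]
          _ = en (A ^ (m * nfac S)) s r := add_zero _
    · set F := nfac S
      have hmF : 1 ≤ m * F := Nat.mul_pos (by omega) hF1
      obtain ⟨t, ht0, htN, hw⟩ := exists_walk A (m * F) hmF s r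
      obtain ⟨i, j, hij, hjc, hteq⟩ := pigeon (Fintype.card S) (fun i => t (i * F)) le_rfl
      have hjm : j ≤ m := hjc.trans hlt.le
      have h1 : en (A ^ (i * F)) s (t (i * F)) ≤
          ∑ x ∈ Finset.Ico 0 (i * F), en A (t x) (t (x + 1)) := by
        have := en_le_walk A t 0 (i * F); rwa [Nat.zero_add, ht0] at this
      have h2 : en (A ^ ((m - j) * F)) (t (j * F)) r ≤
          ∑ x ∈ Finset.Ico (j * F) (m * F), en A (t x) (t (x + 1)) := by
        have := en_le_walk A t (j * F) ((m - j) * F)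
        rwa [show j * F + (m - j) * F = m * F by rw [← add_mul]; congr 1; omega, htN] at this
      have h3 : (0 : ZInf) ≤ ∑ x ∈ Finset.Ico (i * F) (j * F), en A (t x) (t (x + 1)) := by
        have hseg := en_le_walk A t (i * F) ((j - i) * F)
        rw [show i * F + (j - i) * F = j * F by rw [← add_mul]; congr 1; omega] at hseg
        rw [← hteq] at hseg
        exact (hd ((j - i) * F) (Nat.mul_pos (by omega) hF1) (t (i * F))).trans hseg
      have hsplit : ∑ x ∈ Finset.Ico 0 (i * F), en A (t x) (t (x + 1))
            + ∑ x ∈ Finset.Ico (i * F) (j * F), en A (t x) (t (x + 1))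
            + ∑ x ∈ Finset.Ico (j * F) (m * F), en A (t x) (t (x + 1))
          = ∑ x ∈ Finset.Ico 0 (m * F), en A (t x) (t (x + 1)) := by
        rw [Finset.sum_Ico_consecutive _ (Nat.zero_le _)
            (Nat.mul_le_mul_right F hij.le),
          Finset.sum_Ico_consecutive _ (Nat.zero_le _) (Nat.mul_le_mul_right F hjm)]
      have hkey : en (A ^ ((i + (m - j)) * F)) s r ≤ en (A ^ (m * F)) s r := by
        calc en (A ^ ((i + (m - j)) * F)) s r
            = en (A ^ (i * F + (m - j) * F)) s r := by rw [← add_mul]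
          _ ≤ en (A ^ (i * F)) s (t (i * F)) + en (A ^ ((m - j) * F)) (t (i * F)) r :=
              en_pow_add_le A _ _ _ _ _
          _ = en (A ^ (i * F)) s (t (i * F)) + en (A ^ ((m - j) * F)) (t (j * F)) r := by
              rw [hteq]
          _ ≤ (∑ x ∈ Finset.Ico 0 (i * F), en A (t x) (t (x + 1)))
              + ∑ x ∈ Finset.Ico (j * F) (m * F), en A (t x) (t (x + 1)) := add_le_add h1 h2
          _ ≤ (∑ x ∈ Finset.Ico 0 (i * F), en A (t x) (t (x + 1)))
              + ((∑ x ∈ Finset.Ico (i * F) (j * F), en A (t x) (t (x + 1)))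
                + ∑ x ∈ Finset.Ico (j * F) (m * F), en A (t x) (t (x + 1))) :=
              add_le_add_right (le_add_of_nonneg_left h3) _
          _ = ∑ x ∈ Finset.Ico 0 (m * F), en A (t x) (t (x + 1)) := by rw [← hsplit, add_assoc]
          _ ≤ en (A ^ (m * F)) s r := hw
      exact (ihm (i + (m - j)) (by omega) (by omega)).trans hkey

lemma pad (A : Matrix S S (Tropical ZInf)) (a b : ℕ) (s r : S)
    (hb : en (A ^ b) r r = 0) : en (A ^ (a + b)) s r ≤ en (A ^ a) s r :=
  (en_pow_add_le A a b s r r).trans (by rw [hb, add_zero])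

end PltAux

/-- Stabilization of plateau pairs of a stable cycle. -/
theorem pltPairs_stabilize {S : Type*} [Fintype S] [DecidableEq S]
    (A : Matrix S S (Tropical ZInf)) (s₀ : S) (hA : IsStableCycle A s₀)
    (n m : ℕ) (hn : 1 ≤ n) (hm : 1 ≤ m) :
    PltPairs (A ^ (m * nfac S)) ⊆ PltPairs (A ^ mfac S) ∧
    PltPairs (A ^ mfac S) = PltPairs (A ^ (mfac S * n)) ∧
    ∀ p ∈ PltPairs (A ^ (m * nfac S)),
      en (A ^ mfac S) p.1 p.2 ≤ en (A ^ (m * nfac S)) p.1 p.2 ∧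
      en (A ^ mfac S) p.1 p.2 = en (A ^ (n * mfac S)) p.1 p.2 := by
  haveI : Nonempty S := ⟨s₀⟩
  obtain ⟨n', rfl⟩ : ∃ n', n = n' + 1 := ⟨n - 1, by omega⟩
  set c := Fintype.card S with hc
  set F := nfac S with hFdef
  have hc1 : 1 ≤ c := Fintype.card_pos
  have hF1 : 1 ≤ F := Nat.factorial_pos _
  have hd : ∀ k, 1 ≤ k → ∀ x : S, 0 ≤ en (A ^ k) x x := fun k hk x => (hA k hk).2 x
  have hmf : mfac S = c * F := rfl
  -- from any positive-exponent zero diagonal, all exponents `k * F` have zero diagonal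
  have hzero : ∀ r : S, ∀ N, 1 ≤ N → en (A ^ N) r r ≤ 0 →
      ∀ k, 1 ≤ k → en (A ^ (k * F)) r r = 0 := by
    intro r N hN h k hk
    have h𝔫 := PltAux.diag_to_nfac A hd N hN r h
    exact le_antisymm (PltAux.en_diag_rep A F r h𝔫 k hk) (hd _ (Nat.mul_pos hk hF1) r)
  have hzF : ∀ r : S, ∀ q : ℕ, ∀ N, 1 ≤ N → en (A ^ N) r r ≤ 0 →
      en (A ^ (q * F)) r r = 0 := by
    intro r q N hN h
    rcases Nat.eq_zero_or_pos q with h0 | h0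
    · rw [h0, Nat.zero_mul, pow_zero, PltAux.en_one_diag]
    · exact hzero r N hN h q h0
  -- main subset claim
  have hsub : ∀ k, 1 ≤ k → ∀ p : S × S, p ∈ PltPairs (A ^ (k * F)) →
      p ∈ PltPairs (A ^ (c * F)) := by
    rintro k hk ⟨s, r⟩ hp
    simp only [PltPairs, MinStates, Set.mem_setOf_eq] at hp ⊢
    obtain ⟨h1, h2⟩ := hp
    have hkF : 1 ≤ k * F := Nat.mul_pos hk hF1
    refine ⟨hzero r (k * F) hkF h1.le c hc1, ?_⟩
    exact lt_of_le_of_lt (PltAux.main_le A hd s r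
      (PltAux.diag_to_nfac A hd (k * F) hkF r h1.le) k hk) h2
  -- padding claim : from c*F to c*F + q*F
  have hpadd : ∀ q, ∀ p : S × S, p ∈ PltPairs (A ^ (c * F)) →
      en (A ^ (c * F + q * F)) p.1 p.2 ≤ en (A ^ (c * F)) p.1 p.2 ∧
      p ∈ PltPairs (A ^ (c * F + q * F)) := by
    rintro q ⟨s, r⟩ hp
    simp only [PltPairs, MinStates, Set.mem_setOf_eq] at hp ⊢
    obtain ⟨h1, h2⟩ := hp
    have hcF : 1 ≤ c * F := Nat.mul_pos hc1 hF1
    have hq : en (A ^ (q * F)) r r = 0 := hzF r q (c * F) hcF h1.le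
    have hle : en (A ^ (c * F + q * F)) s r ≤ en (A ^ (c * F)) s r := PltAux.pad A _ _ s r hq
    refine ⟨hle, ?_, lt_of_le_of_lt hle h2⟩
    have : c * F + q * F = (c + q) * F := by ring
    rw [this]
    exact hzero r (c * F) hcF h1.le (c + q) (by omega)
  refine ⟨?_, ?_, ?_⟩
  · -- part 1
    rw [hmf]; exact hsub m hm
  · -- part 2 : PltPairs (A ^ mfac S) = PltPairs (A ^ (mfac S * n'+1))
    rw [hmf]
    have e1 : c * F * (n' + 1) = c * F + (c * n') * F := by ring
    ext p
    constructor
    · intro hp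
      rw [e1]
      exact ((hpadd (c * n') p hp).2)
    · intro hp
      have e2 : c * F * (n' + 1) = (c * (n' + 1)) * F := by ring
      rw [e2] at hp
      exact hsub (c * (n' + 1)) (Nat.mul_pos hc1 (by omega)) p hp
  · -- part 3
    rintro p hp
    have hp' := hsub m hm p hp
    have hle1 : en (A ^ mfac S) p.1 p.2 ≤ en (A ^ (m * nfac S)) p.1 p.2 := by
      simp only [PltPairs, MinStates, Set.mem_setOf_eq] at hp
      rw [hmf]
      exact PltAux.main_le A hd p.1 p.2
        (PltAux.diag_to_nfac A hd (m * F) (Nat.mul_pos hm hF1) p.2 hp.1.le) m hm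
    refine ⟨hle1, le_antisymm ?_ ?_⟩
    · -- en (A^(c*F)) ≤ en (A^((n'+1)*(c*F)))
      simp only [PltPairs, MinStates, Set.mem_setOf_eq] at hp
      have e3 : (n' + 1) * mfac S = ((n' + 1) * c) * F := by rw [hmf]; ring
      rw [e3, hmf]
      exact PltAux.main_le A hd p.1 p.2
        (PltAux.diag_to_nfac A hd (m * F) (Nat.mul_pos hm hF1) p.2 hp.1.le)
        ((n' + 1) * c) (Nat.mul_pos (by omega) hc1)
    · have e4 : (n' + 1) * mfac S = c * F + (n' * c) * F := by rw [hmf]; ring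
      rw [e4, hmf]
      exact (hpadd (n' * c) p hp').1
end
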